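/- arXiv:1708.01479 — 4 statements merged into one kernel-verified Lean document; each statement's English description precedes it below -/
import Mathlib

section
/- Let α : Ω × ℝ^k → ℝ^k satisfy the Carathéodory condition and the growth bound |α(x,z)| ≤ c₁|z|^{p-1} + c₂(x) with c₁ > 0 and c₂ ∈ L^{p/(p-1)}(Ω) nonnegative. Then the decomposed energetic operator F_ℓ : V_ℓ → V_ℓ*, defined by ⟨F_ℓ u, v⟩ = ∫_{Ω_ℓ} χ_ℓ α(δ_{p,ℓ}u) · δ_{p,ℓ}v dx, is well defined; in particular |⟨F_ℓ u, v⟩| ≤ (c₁‖δ_{p,ℓ}u‖_{L^p(Ω_ℓ,χ_ℓ)^k}^{p-1} + ‖c₂‖_{L^{p/(p-1)}(Ω_ℓ,χ_ℓ)}) ‖δ_{p,ℓ}v‖_{L^p(Ω_ℓ,χ_ℓ)^k} for all u, v ∈ V_ℓ. -/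
open MeasureTheory ENNReal Filter Topology

noncomputable section

abbrev Euc (d : ℕ) := EuclideanSpace ℝ (Fin d)

/-- A test function on `Ω`: smooth with compact support contained in `Ω`. -/
def IsTestFun {d : ℕ} (Ω : Set (Euc d)) (φ : Euc d → ℝ) : Prop :=
  ContDiff ℝ (⊤ : ℕ∞) φ ∧ HasCompactSupport φ ∧ tsupport φ ⊆ Ω

/-- The weighted measure `χ dx` on `Ωl`, underlying the weighted Lebesgue space
`L^p(Ωl, χ)`. -/
def wMeas {d : ℕ} (Ωl : Set (Euc d)) (χ : Euc d → ℝ) : Measure (Euc d) :=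
  (volume.restrict Ωl).withDensity fun x => ENNReal.ofReal (χ x)

/-- `v ∈ L^p(Ω)^k` represents the `k` distributions `D j` (the components of `δu`). -/
def IsRep {d k : ℕ} (Ω : Set (Euc d)) (p : ℝ≥0∞)
    (D : Fin k → (Euc d → ℝ) → ℝ) (v : Euc d → EuclideanSpace ℝ (Fin k)) : Prop :=
  MemLp v p (volume.restrict Ω) ∧
    ∀ (j : Fin k) (φ : Euc d → ℝ), IsTestFun Ω φ → D j φ = ∫ x in Ω, v x j * φ x

/-- `v ∈ L^p(Ωl, χ)^k` represents the weighted distributions `χ · D j`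
(the components of `χ δu`). -/
def IsWRep {d k : ℕ} (Ω Ωl : Set (Euc d)) (χ : Euc d → ℝ) (p : ℝ≥0∞)
    (D : Fin k → (Euc d → ℝ) → ℝ) (v : Euc d → EuclideanSpace ℝ (Fin k)) : Prop :=
  MemLp v p (wMeas Ωl χ) ∧
    ∀ (j : Fin k) (φ : Euc d → ℝ), IsTestFun Ω φ →
      D j (fun x => χ x * φ x) = ∫ x in Ωl, χ x * (v x j * φ x)

set_option maxHeartbeats 2000000 in
/-- under the Carathéodory and growth assumptions on `α`, the decomposed
energetic operator `F_ℓ` is well defined: the integrand of `⟨F_ℓ u, v⟩` is integrable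
and the Hölder bound
`|⟨F_ℓ u, v⟩| ≤ (c₁‖δ_{p,ℓ}u‖_{L^p(χ)}^{p-1} + ‖c₂‖_{L^{p/(p-1)}(χ)}) ‖δ_{p,ℓ}v‖_{L^p(χ)}`
holds. -/
theorem F_decomposed_well_defined {d k : ℕ}
    (Ω Ωl : Set (Euc d)) (hΩo : IsOpen Ω) (hΩb : Bornology.IsBounded Ω)
    (hΩlo : IsOpen Ωl) (hsub : Ωl ⊆ Ω)
    (χ : Euc d → ℝ) (hχsm : ContDiff ℝ (⊤ : ℕ∞) χ) (hχnn : ∀ x, 0 ≤ χ x)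
    (hχz : ∀ x ∈ Ω \ Ωl, χ x = 0)
    (p : ℝ) (hp : 1 < p)
    (α : Euc d → EuclideanSpace ℝ (Fin k) → EuclideanSpace ℝ (Fin k))
    -- (α₁) Carathéodory condition
    (hαmeas : ∀ z, Measurable fun x => α x z) (hαcont : ∀ x, Continuous (α x))
    -- (α₂) growth condition
    (c1 : ℝ) (hc1 : 0 < c1) (c2 : Euc d → ℝ) (hc2nn : ∀ x, 0 ≤ c2 x)
    (hc2mem : MemLp c2 (ENNReal.ofReal (p / (p - 1))) (volume.restrict Ω))
    (hgrowth : ∀ x ∈ Ω, ∀ z, ‖α x z‖ ≤ c1 * ‖z‖ ^ (p - 1) + c2 x)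
    -- `δ_{p,ℓ} u` and `δ_{p,ℓ} v` for `u, v ∈ V_ℓ`
    (du dv : Euc d → EuclideanSpace ℝ (Fin k))
    (hdu : MemLp du (ENNReal.ofReal p) (wMeas Ωl χ))
    (hdv : MemLp dv (ENNReal.ofReal p) (wMeas Ωl χ)) :
    Integrable (fun x => χ x * (inner ℝ (α x (du x)) (dv x) : ℝ)) (volume.restrict Ωl) ∧
    |∫ x in Ωl, χ x * (inner ℝ (α x (du x)) (dv x) : ℝ)| ≤
      (c1 * (∫ x in Ωl, χ x * ‖du x‖ ^ p) ^ ((p - 1) / p)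
          + (∫ x in Ωl, χ x * c2 x ^ (p / (p - 1))) ^ ((p - 1) / p))
        * (∫ x in Ωl, χ x * ‖dv x‖ ^ p) ^ (1 / p) := by
  have hχm : Measurable χ := hχsm.continuous.measurable
  have hχnnm : Measurable fun x => (χ x).toNNReal := hχm.real_toNNReal
  set μ := wMeas Ωl χ with hμdef
  have hp1 : (0:ℝ) < p - 1 := by linarith
  have hconj : p.HolderConjugate (p / (p - 1)) := Real.HolderConjugate.conjExponent hp
  -- transfer between the weighted measure and the weighted integral
  have hμeq : μ = (volume.restrict Ωl).withDensity fun x => ((χ x).toNNReal : ℝ≥0∞) := rfl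
  have wInt : ∀ g : Euc d → ℝ, (∫ x, g x ∂μ) = ∫ x in Ωl, χ x * g x := by
    intro g
    rw [hμeq, integral_withDensity_eq_integral_smul hχnnm g]
    refine integral_congr_ae (Eventually.of_forall fun x => ?_)
    simp [NNReal.smul_def, Real.coe_toNNReal _ (hχnn x)]
  have wIntegrable : ∀ g : Euc d → ℝ, Integrable g μ →
      Integrable (fun x => χ x * g x) (volume.restrict Ωl) := by
    intro g hg
    rw [hμeq] at hg
    have h1 : Integrable (fun x => (χ x).toNNReal • g x) (volume.restrict Ωl) :=
      (integrable_withDensity_iff_integrable_smul hχnnm).mp hg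
    refine h1.congr (Eventually.of_forall fun x => ?_)
    simp [NNReal.smul_def, Real.coe_toNNReal _ (hχnn x)]
  -- a.e. membership in Ωl
  have hacμ : μ ≪ volume.restrict Ωl := withDensity_absolutelyContinuous _ _
  have haeΩl : ∀ᵐ x ∂μ, x ∈ Ωl := hacμ.ae_le (ae_restrict_mem hΩlo.measurableSet)
  -- bound on χ and measure comparison
  obtain ⟨M, hM⟩ := (hΩb.isCompact_closure).exists_bound_of_continuousOn
    hχsm.continuous.continuousOn
  have hμle : μ ≤ ENNReal.ofReal M • volume.restrict Ω := by
    calc μ ≤ (volume.restrict Ωl).withDensity (fun _ => ENNReal.ofReal M) := by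
          refine withDensity_mono ?_
          filter_upwards [ae_restrict_mem hΩlo.measurableSet] with x hx
          refine ENNReal.ofReal_le_ofReal (le_trans (le_abs_self _) ?_)
          simpa [Real.norm_eq_abs] using hM x (subset_closure (hsub hx))
      _ = ENNReal.ofReal M • volume.restrict Ωl := withDensity_const _
      _ ≤ ENNReal.ofReal M • volume.restrict Ω := by
          refine Measure.le_iff'.mpr fun s => ?_
          simp only [Measure.smul_apply, smul_eq_mul]
          exact mul_le_mul_right (Measure.le_iff'.mp (Measure.restrict_mono hsub le_rfl) s) _
  -- MemLp facts with respect to μ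
  have Mc2 : MemLp c2 (ENNReal.ofReal (p / (p - 1))) μ :=
    hc2mem.of_measure_le_smul (c := ENNReal.ofReal M) ENNReal.ofReal_ne_top hμle
  have Mdu : MemLp (fun x => ‖du x‖ ^ (p - 1)) (ENNReal.ofReal (p / (p - 1))) μ := by
    have h := hdu.norm_rpow_div (ENNReal.ofReal (p - 1))
    rw [ENNReal.toReal_ofReal (by linarith : (0:ℝ) ≤ p - 1)] at h
    rwa [show ENNReal.ofReal p / ENNReal.ofReal (p - 1) = ENNReal.ofReal (p / (p - 1)) from
      (ENNReal.ofReal_div_of_pos hp1).symm] at h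
  have Mdvn : MemLp (fun x => ‖dv x‖) (ENNReal.ofReal p) μ := hdv.norm
  have hE : (1:ℝ≥0∞)/1 = 1/(ENNReal.ofReal (p / (p - 1))) + 1/(ENNReal.ofReal p) := by
    simp only [one_div, inv_one]
    rw [add_comm]
    exact hconj.inv_add_inv_ennreal.symm
  -- integrability of the products
  have I2' : MemLp ((fun x => ‖du x‖ ^ (p - 1)) • fun x => ‖dv x‖) 1 μ :=
    Mdvn.smul Mdu (hpqr := ⟨by simpa only [one_div, inv_one] using hE.symm⟩)
  have I2 : Integrable (fun x => ‖du x‖ ^ (p - 1) * ‖dv x‖) μ :=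
    (memLp_one_iff_integrable.mp I2').congr (Eventually.of_forall fun x => rfl)
  have I3' : MemLp (c2 • fun x => ‖dv x‖) 1 μ :=
    Mdvn.smul Mc2 (hpqr := ⟨by simpa only [one_div, inv_one] using hE.symm⟩)
  have I3 : Integrable (fun x => c2 x * ‖dv x‖) μ :=
    (memLp_one_iff_integrable.mp I3').congr (Eventually.of_forall fun x => rfl)
  have I1 : Integrable (fun x => (c1 * ‖du x‖ ^ (p - 1) + c2 x) * ‖dv x‖) μ :=
    ((I2.const_mul c1).add I3).congr (Eventually.of_forall fun x => by
      simp only [Pi.add_apply]; ring)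
  -- measurability of x ↦ α x (du x)
  have hUm : Measurable (Function.uncurry fun z (x : Euc d) => α x z) :=
    measurable_uncurry_of_continuous_of_measurable (fun x => hαcont x) (fun z => hαmeas z)
  have hwm : Measurable (hdu.1.mk du) := hdu.1.stronglyMeasurable_mk.measurable
  have hGm : Measurable fun x => α x (hdu.1.mk du x) := hUm.comp (hwm.prodMk measurable_id)
  have hgae : (fun x => α x (du x)) =ᵐ[μ] fun x => α x (hdu.1.mk du x) := by
    filter_upwards [hdu.1.ae_eq_mk] with x hx
    rw [hx]
  have hgm : AEStronglyMeasurable (fun x => α x (du x)) μ :=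
    hGm.stronglyMeasurable.aestronglyMeasurable.congr hgae.symm
  have h0m : AEStronglyMeasurable (fun x => (inner ℝ (α x (du x)) (dv x) : ℝ)) μ :=
    hgm.inner hdv.1
  have hbound : ∀ᵐ x ∂μ, ‖(inner ℝ (α x (du x)) (dv x) : ℝ)‖ ≤
      (c1 * ‖du x‖ ^ (p - 1) + c2 x) * ‖dv x‖ := by
    filter_upwards [haeΩl] with x hx
    calc ‖(inner ℝ (α x (du x)) (dv x) : ℝ)‖ ≤ ‖α x (du x)‖ * ‖dv x‖ := by
          rw [Real.norm_eq_abs]; exact abs_real_inner_le_norm _ _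
      _ ≤ (c1 * ‖du x‖ ^ (p - 1) + c2 x) * ‖dv x‖ :=
          mul_le_mul_of_nonneg_right (hgrowth x (hsub hx) (du x)) (norm_nonneg _)
  have I0 : Integrable (fun x => (inner ℝ (α x (du x)) (dv x) : ℝ)) μ := I1.mono' h0m hbound
  -- the main estimate with respect to μ
  have habs : |∫ x, (inner ℝ (α x (du x)) (dv x) : ℝ) ∂μ| ≤
      ∫ x, (c1 * ‖du x‖ ^ (p - 1) + c2 x) * ‖dv x‖ ∂μ := by
    rw [← Real.norm_eq_abs]
    exact (norm_integral_le_integral_norm _).trans (integral_mono_ae I0.norm I1 hbound)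
  have hsplit : ∫ x, (c1 * ‖du x‖ ^ (p - 1) + c2 x) * ‖dv x‖ ∂μ
      = c1 * ∫ x, ‖du x‖ ^ (p - 1) * ‖dv x‖ ∂μ + ∫ x, c2 x * ‖dv x‖ ∂μ := by
    calc ∫ x, (c1 * ‖du x‖ ^ (p - 1) + c2 x) * ‖dv x‖ ∂μ
        = ∫ x, (c1 * (‖du x‖ ^ (p - 1) * ‖dv x‖) + c2 x * ‖dv x‖) ∂μ :=
          integral_congr_ae (Eventually.of_forall fun x => by ring)
      _ = (∫ x, c1 * (‖du x‖ ^ (p - 1) * ‖dv x‖) ∂μ) + ∫ x, c2 x * ‖dv x‖ ∂μ :=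
          integral_add (I2.const_mul c1) I3
      _ = c1 * ∫ x, ‖du x‖ ^ (p - 1) * ‖dv x‖ ∂μ + ∫ x, c2 x * ‖dv x‖ ∂μ := by
          rw [integral_const_mul]
  have hH1 : ∫ x, ‖du x‖ ^ (p - 1) * ‖dv x‖ ∂μ ≤
      (∫ x, ‖du x‖ ^ p ∂μ) ^ ((p - 1) / p) * (∫ x, ‖dv x‖ ^ p ∂μ) ^ (1 / p) := by
    have h := integral_mul_le_Lp_mul_Lq_of_nonneg hconj.symm
      (Eventually.of_forall fun x => Real.rpow_nonneg (norm_nonneg _) _)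
      (Eventually.of_forall fun x => norm_nonneg _) Mdu Mdvn
    beta_reduce at h
    have e1 : ∫ x, (‖du x‖ ^ (p - 1)) ^ (p / (p - 1)) ∂μ = ∫ x, ‖du x‖ ^ p ∂μ := by
      refine integral_congr_ae (Eventually.of_forall fun x => ?_)
      show (‖du x‖ ^ (p - 1)) ^ (p / (p - 1)) = ‖du x‖ ^ p
      rw [← Real.rpow_mul (norm_nonneg _), hconj.sub_one_mul_conj]
    have e2 : 1 / (p / (p - 1)) = (p - 1) / p := one_div_div _ _
    rw [e1, e2] at h
    exact h
  have hH2 : ∫ x, c2 x * ‖dv x‖ ∂μ ≤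
      (∫ x, c2 x ^ (p / (p - 1)) ∂μ) ^ ((p - 1) / p) * (∫ x, ‖dv x‖ ^ p ∂μ) ^ (1 / p) := by
    have h := integral_mul_le_Lp_mul_Lq_of_nonneg hconj.symm
      (Eventually.of_forall fun x => hc2nn x)
      (Eventually.of_forall fun x => norm_nonneg _) Mc2 Mdvn
    beta_reduce at h
    rwa [one_div_div] at h
  have key : |∫ x, (inner ℝ (α x (du x)) (dv x) : ℝ) ∂μ| ≤
      (c1 * (∫ x, ‖du x‖ ^ p ∂μ) ^ ((p - 1) / p)
          + (∫ x, c2 x ^ (p / (p - 1)) ∂μ) ^ ((p - 1) / p))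
        * (∫ x, ‖dv x‖ ^ p ∂μ) ^ (1 / p) := by
    calc |∫ x, (inner ℝ (α x (du x)) (dv x) : ℝ) ∂μ|
        ≤ ∫ x, (c1 * ‖du x‖ ^ (p - 1) + c2 x) * ‖dv x‖ ∂μ := habs
      _ = c1 * ∫ x, ‖du x‖ ^ (p - 1) * ‖dv x‖ ∂μ + ∫ x, c2 x * ‖dv x‖ ∂μ := hsplit
      _ ≤ c1 * ((∫ x, ‖du x‖ ^ p ∂μ) ^ ((p - 1) / p) * (∫ x, ‖dv x‖ ^ p ∂μ) ^ (1 / p))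
            + (∫ x, c2 x ^ (p / (p - 1)) ∂μ) ^ ((p - 1) / p) * (∫ x, ‖dv x‖ ^ p ∂μ) ^ (1 / p) :=
          add_le_add (mul_le_mul_of_nonneg_left hH1 hc1.le) hH2
      _ = (c1 * (∫ x, ‖du x‖ ^ p ∂μ) ^ ((p - 1) / p)
            + (∫ x, c2 x ^ (p / (p - 1)) ∂μ) ^ ((p - 1) / p))
          * (∫ x, ‖dv x‖ ^ p ∂μ) ^ (1 / p) := by ring
  -- conclude
  refine ⟨wIntegrable _ I0, ?_⟩
  rw [← wInt (fun x => (inner ℝ (α x (du x)) (dv x) : ℝ)),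
    ← wInt (fun x => ‖du x‖ ^ p), ← wInt (fun x => c2 x ^ (p / (p - 1))),
    ← wInt (fun x => ‖dv x‖ ^ p)]
  exact key
end
end

section
/- Under Assumptions α₁, α₂, α₄ and for h > 0, the operator γ + hF_ℓ : V_ℓ → V_ℓ* is coercive: ⟨(γ+hF_ℓ)u, u⟩ / ‖u‖_{V_ℓ} → ∞ as ‖u‖_{V_ℓ} → ∞, where ‖u‖_{V_ℓ} = ‖u‖_H + ‖δ_{p,ℓ}u‖_{L^p(Ω_ℓ,χ_ℓ)^k}. In fact ⟨(γ+hF_ℓ)u, u⟩ ≥ ‖u‖_H² + c₃h‖δ_{p,ℓ}u‖_{L^p(Ω_ℓ,χ_ℓ)^k}^p − h‖χ_ℓ‖_{L^∞}‖c₄‖_{L¹}. -/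
open MeasureTheory ENNReal Filter Topology

noncomputable section

private lemma coercive_aux (p C cK cc : ℝ) (hp : 1 < p) (hccpos : 0 < cc)
    (hcKnn : 0 ≤ cK) :
    ∃ R : ℝ, ∀ a b P : ℝ, 0 ≤ a → 0 ≤ b →
      a ^ 2 + cc * b ^ p - cK ≤ P → R ≤ a + b → C ≤ P / (a + b) := by
  set Q := (2 * |C| + cK) / cc with hQ
  have hQnn : 0 ≤ Q := div_nonneg (by positivity) hccpos.le
  refine ⟨2 * max (max 1 (2 * |C| + cK)) (Q ^ (1 / (p - 1))), fun a b P hann hbnn hP hR => ?_⟩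
  have hNpos : 0 < a + b := by
    have h1 : (1:ℝ) ≤ max (max 1 (2 * |C| + cK)) (Q ^ (1 / (p - 1))) :=
      le_trans (le_max_left _ _) (le_max_left _ _)
    linarith
  rw [le_div_iff₀ hNpos]
  have hCabs : C * (a + b) ≤ |C| * (a + b) :=
    mul_le_mul_of_nonneg_right (le_abs_self C) hNpos.le
  have key : C * (a + b) + cK ≤ a ^ 2 + cc * b ^ p := by
    rcases le_total b a with hba | hab
    · have hma : max (max 1 (2 * |C| + cK)) (Q ^ (1 / (p - 1))) ≤ a := by linarith
      have ha1 : 1 ≤ a := le_trans (le_trans (le_max_left _ _) (le_max_left _ _)) hma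
      have haK : 2 * |C| + cK ≤ a := le_trans (le_trans (le_max_right _ _) (le_max_left _ _)) hma
      have h1 : a * (2 * |C| + cK) ≤ a * a := mul_le_mul_of_nonneg_left haK (by linarith)
      have h2 : |C| * (a + b) ≤ |C| * (2 * a) :=
        mul_le_mul_of_nonneg_left (by linarith) (abs_nonneg C)
      have h3 : cK * 1 ≤ cK * a := mul_le_mul_of_nonneg_left ha1 hcKnn
      have h4 : 0 ≤ cc * b ^ p := mul_nonneg hccpos.le (Real.rpow_nonneg hbnn p)
      nlinarith
    · have hmb : max (max 1 (2 * |C| + cK)) (Q ^ (1 / (p - 1))) ≤ b := by linarith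
      have hb1 : 1 ≤ b := le_trans (le_trans (le_max_left _ _) (le_max_left _ _)) hmb
      have hbQ : Q ^ (1 / (p - 1)) ≤ b := le_trans (le_max_right _ _) hmb
      have hp1 : (0:ℝ) < p - 1 := by linarith
      have hQle : Q ≤ b ^ (p - 1) := by
        have h5 : (Q ^ (1 / (p - 1))) ^ (p - 1) ≤ b ^ (p - 1) :=
          Real.rpow_le_rpow (Real.rpow_nonneg hQnn _) hbQ hp1.le
        rwa [← Real.rpow_mul hQnn, one_div, inv_mul_cancel₀ hp1.ne', Real.rpow_one] at h5
      have hbsplit : b ^ p = b ^ (p - 1) * b := by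
        rw [show p = (p - 1) + 1 by ring, Real.rpow_add' hbnn (by intro hc; linarith),
          Real.rpow_one]
        ring_nf
      have h1 : cc * (Q * b) ≤ cc * (b ^ (p - 1) * b) :=
        mul_le_mul_of_nonneg_left (mul_le_mul_of_nonneg_right hQle hbnn) hccpos.le
      have h2b : cc * (Q * b) = 2 * |C| * b + cK * b := by
        rw [hQ]; field_simp
      have h3 : |C| * (a + b) ≤ |C| * (2 * b) :=
        mul_le_mul_of_nonneg_left (by linarith) (abs_nonneg C)
      have h4 : cK * 1 ≤ cK * b := mul_le_mul_of_nonneg_left hb1 hcKnn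
      rw [hbsplit]
      nlinarith [sq_nonneg a]
  linarith

/-- under assumptions (α₁), (α₂), (α₄) and `h > 0`, the operator
`γ + hF_ℓ` is coercive: `⟨(γ+hF_ℓ)u, u⟩ ≥ ‖u‖_H² + c₃h‖δ_{p,ℓ}u‖_{L^p(χ)}^p −
h‖χ‖_∞‖c₄‖_{L¹}`, and consequently `⟨(γ+hF_ℓ)u, u⟩ / ‖u‖_{V_ℓ} → ∞` as
`‖u‖_{V_ℓ} = ‖u‖_H + ‖δ_{p,ℓ}u‖_{L^p(χ)} → ∞`. -/
theorem gamma_add_hF_coercive {d k : ℕ}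
    (Ω Ωl : Set (Euc d)) (hΩo : IsOpen Ω) (hΩb : Bornology.IsBounded Ω)
    (hΩlo : IsOpen Ωl) (hsub : Ωl ⊆ Ω)
    (χ : Euc d → ℝ) (hχsm : ContDiff ℝ (⊤ : ℕ∞) χ) (hχnn : ∀ x, 0 ≤ χ x)
    (hχz : ∀ x ∈ Ω \ Ωl, χ x = 0)
    (p : ℝ) (hp : 1 < p)
    (α : Euc d → EuclideanSpace ℝ (Fin k) → EuclideanSpace ℝ (Fin k))
    -- (α₁) Carathéodory condition
    (hαmeas : ∀ z, Measurable fun x => α x z) (hαcont : ∀ x, Continuous (α x))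
    -- (α₂) growth condition
    (c1 : ℝ) (hc1 : 0 < c1) (c2 : Euc d → ℝ) (hc2nn : ∀ x, 0 ≤ c2 x)
    (hc2mem : MemLp c2 (ENNReal.ofReal (p / (p - 1))) (volume.restrict Ω))
    (hgrowth : ∀ x ∈ Ω, ∀ z, ‖α x z‖ ≤ c1 * ‖z‖ ^ (p - 1) + c2 x)
    -- (α₄) coercivity
    (c3 : ℝ) (hc3 : 0 < c3) (c4 : Euc d → ℝ)
    (hc4mem : Integrable c4 (volume.restrict Ω))
    (hαcoer : ∀ x ∈ Ω, ∀ z, c3 * ‖z‖ ^ p - c4 x ≤ (inner ℝ (α x z) z : ℝ))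
    {H : Type*} [NormedAddCommGroup H] [InnerProductSpace ℝ H]
    (h : ℝ) (hh : 0 < h) :
    -- lower bound for the duality pairing `⟨(γ+hF_ℓ)u, u⟩`
    (∀ (u : H) (du : Euc d → EuclideanSpace ℝ (Fin k)),
      MemLp du (ENNReal.ofReal p) (wMeas Ωl χ) →
      ‖u‖ ^ 2 + c3 * h * (∫ x in Ωl, χ x * ‖du x‖ ^ p)
          - h * (eLpNorm χ ⊤ (volume.restrict Ωl)).toReal * (∫ x in Ωl, |c4 x|)
        ≤ (inner ℝ u u : ℝ) + h * ∫ x in Ωl, χ x * (inner ℝ (α x (du x)) (du x) : ℝ)) ∧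
    -- coercivity: the Rayleigh-type quotient blows up as the energetic norm grows
    (∀ C : ℝ, ∃ R : ℝ, ∀ (u : H) (du : Euc d → EuclideanSpace ℝ (Fin k)),
      MemLp du (ENNReal.ofReal p) (wMeas Ωl χ) →
      R ≤ ‖u‖ + (∫ x in Ωl, χ x * ‖du x‖ ^ p) ^ (1 / p) →
      C ≤ ((inner ℝ u u : ℝ) + h * ∫ x in Ωl, χ x * (inner ℝ (α x (du x)) (du x) : ℝ))
            / (‖u‖ + (∫ x in Ωl, χ x * ‖du x‖ ^ p) ^ (1 / p))) := by

  have hp0 : (0:ℝ) < p := by linarith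
  have hχc : Continuous χ := hχsm.continuous
  have hχm : Measurable χ := hχc.measurable
  have hΩlm : MeasurableSet Ωl := hΩlo.measurableSet
  -- bound on χ over Ωl
  obtain ⟨CM, hCM⟩ : ∃ CM, ∀ x ∈ closure Ωl, ‖χ x‖ ≤ CM :=
    ((hΩb.subset hsub).isCompact_closure).exists_bound_of_continuousOn hχc.continuousOn
  set CM' := max CM 0 with hCM'
  have hCM'nn : 0 ≤ CM' := le_max_right _ _
  have hχbd : ∀ x ∈ Ωl, ‖χ x‖ ≤ CM' :=
    fun x hx => (hCM x (subset_closure hx)).trans (le_max_left _ _)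
  have hMtop : eLpNorm χ ⊤ (volume.restrict Ωl) ≠ ∞ := by
    rw [eLpNorm_exponent_top]
    exact ((eLpNormEssSup_le_of_ae_bound (C := CM')
      (ae_restrict_of_forall_mem hΩlm hχbd)).trans_lt ENNReal.ofReal_lt_top).ne
  set Mr := (eLpNorm χ ⊤ (volume.restrict Ωl)).toReal with hMr
  have hχle : ∀ᵐ x ∂(volume.restrict Ωl), χ x ≤ Mr := by
    filter_upwards [ae_le_eLpNormEssSup (f := χ) (μ := volume.restrict Ωl)] with x hx
    have h1 : ‖χ x‖ ≤ Mr := by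
      rw [hMr, eLpNorm_exponent_top]
      refine ENNReal.toReal_mono ?_ hx |>.trans_eq' ?_
      · rwa [eLpNorm_exponent_top] at hMtop
      · simp
    exact (le_abs_self _).trans h1
  -- transfer between weighted measure and weighted integrals
  have hsme : ∀ F : Euc d → ℝ, (fun x => (χ x).toNNReal • F x) = fun x => χ x * F x := by
    intro F; funext x; simp [NNReal.smul_def, Real.coe_toNNReal _ (hχnn x)]
  have hwd : wMeas Ωl χ = (volume.restrict Ωl).withDensity fun x => ((χ x).toNNReal : ℝ≥0∞) := rfl
  have hkey : ∀ F : Euc d → ℝ, ∫ x, F x ∂(wMeas Ωl χ) = ∫ x in Ωl, χ x * F x := by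
    intro F
    rw [hwd, integral_withDensity_eq_integral_smul hχm.real_toNNReal F, hsme F]
  have hkeyInt : ∀ F : Euc d → ℝ,
      Integrable F (wMeas Ωl χ) ↔ Integrable (fun x => χ x * F x) (volume.restrict Ωl) := by
    intro F
    rw [hwd, integrable_withDensity_iff_integrable_smul hχm.real_toNNReal, hsme F]
  -- the main estimate
  have main : ∀ (u : H) (du : Euc d → EuclideanSpace ℝ (Fin k)),
      MemLp du (ENNReal.ofReal p) (wMeas Ωl χ) →
      ‖u‖ ^ 2 + c3 * h * (∫ x in Ωl, χ x * ‖du x‖ ^ p)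
          - h * Mr * (∫ x in Ωl, |c4 x|)
        ≤ (inner ℝ u u : ℝ) + h * ∫ x in Ωl, χ x * (inner ℝ (α x (du x)) (du x) : ℝ) := by
    intro u du hdu
    set v := hdu.1.mk du with hv
    have hvm : StronglyMeasurable v := hdu.1.stronglyMeasurable_mk
    have hdv : du =ᵐ[wMeas Ωl χ] v := hdu.1.ae_eq_mk
    have hdv2 : ∀ᵐ x ∂(volume.restrict Ωl), χ x ≠ 0 → du x = v x := by
      have h1 : ∀ᵐ x ∂(volume.restrict Ωl), ENNReal.ofReal (χ x) ≠ 0 → du x = v x :=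
        (ae_withDensity_iff (ENNReal.measurable_ofReal.comp hχm)).mp hdv
      filter_upwards [h1] with x hx h0
      exact hx (by simpa [ENNReal.ofReal_eq_zero, not_le] using lt_of_le_of_ne (hχnn x) (Ne.symm h0))
    have hcongr : ∀ G : Euc d → EuclideanSpace ℝ (Fin k) → ℝ,
        (fun x => χ x * G x (du x)) =ᵐ[(volume.restrict Ωl)] fun x => χ x * G x (v x) := by
      intro G
      filter_upwards [hdv2] with x hx
      rcases eq_or_ne (χ x) 0 with h0 | h0
      · simp [h0]
      · rw [hx h0]
    have hdu' : MemLp v (ENNReal.ofReal p) (wMeas Ωl χ) := hdu.ae_eq hdv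
    -- integrability of χ ‖v‖^p
    have hvp : Integrable (fun x => ‖v x‖ ^ p) (wMeas Ωl χ) := by
      have := hdu'.integrable_norm_rpow (ENNReal.ofReal_pos.mpr hp0).ne' ENNReal.ofReal_ne_top
      simpa [ENNReal.toReal_ofReal hp0.le] using this
    have hχvp : Integrable (fun x => χ x * ‖v x‖ ^ p) (volume.restrict Ωl) := (hkeyInt _).mp hvp
    -- c2 is in L^{p'} of the weighted measure
    have hν_le : wMeas Ωl χ ≤ (ENNReal.ofReal CM') • (volume.restrict Ω) := by
      have h1 : wMeas Ωl χ ≤ (ENNReal.ofReal CM') • (volume.restrict Ωl) := by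
        rw [← withDensity_const, wMeas]
        refine withDensity_mono ?_
        filter_upwards [ae_restrict_mem hΩlm] with x hx
        exact ENNReal.ofReal_le_ofReal ((le_abs_self _).trans (hχbd x hx))
      refine h1.trans fun s => ?_
      simp only [Measure.smul_apply, smul_eq_mul]
      exact mul_le_mul_right (Measure.restrict_mono hsub le_rfl s) _
    have hc2ν : MemLp c2 (ENNReal.ofReal (p / (p - 1))) (wMeas Ωl χ) :=
      hc2mem.of_measure_le_smul ENNReal.ofReal_ne_top hν_le
    have hpc : p.HolderConjugate (p / (p - 1)) := Real.HolderConjugate.conjExponent hp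
    have hconj : (1:ℝ≥0∞) / 1 = 1 / ENNReal.ofReal (p / (p - 1)) + 1 / ENNReal.ofReal p := by
      rw [one_div_one, one_div, one_div, ← ENNReal.ofReal_inv_of_pos hpc.symm.pos,
        ← ENNReal.ofReal_inv_of_pos hp0,
        ← ENNReal.ofReal_add (inv_nonneg.mpr (div_nonneg hp0.le (by linarith))) (inv_nonneg.mpr hp0.le)]
      rw [show (p / (p - 1))⁻¹ + p⁻¹ = 1 from by
        have := hpc.inv_add_inv_eq_one; linarith]
      simp
    have hprod : MemLp (c2 • fun x => ‖v x‖) 1 (wMeas Ωl χ) :=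
      haveI : ENNReal.HolderTriple (ENNReal.ofReal (p / (p - 1))) (ENNReal.ofReal p) 1 :=
        ⟨by simpa only [one_div, inv_one] using hconj.symm⟩
      MemLp.smul hdu'.norm hc2ν
    have hint2 : Integrable (fun x => c2 x * ‖v x‖) (wMeas Ωl χ) := by
      have := memLp_one_iff_integrable.mp hprod
      exact this
    have hχ2 : Integrable (fun x => χ x * (c2 x * ‖v x‖)) (volume.restrict Ωl) := (hkeyInt _).mp hint2
    -- measurability of the nonlinear term
    have hAm : Measurable fun x => α x (v x) := by
      have hum : Measurable (Function.uncurry fun z x => α x z) :=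
        measurable_uncurry_of_continuous_of_measurable (fun x => hαcont x) hαmeas
      exact hum.comp (hvm.measurable.prodMk measurable_id)
    have hgm : AEStronglyMeasurable (fun x => χ x * (inner ℝ (α x (v x)) (v x) : ℝ)) (volume.restrict Ωl) :=
      (hχm.mul (hAm.inner hvm.measurable)).aestronglyMeasurable
    -- pointwise norm estimate on the nonlinear term
    have hrp : ∀ z : EuclideanSpace ℝ (Fin k), ‖z‖ ^ (p - 1) * ‖z‖ = ‖z‖ ^ p := by
      intro z
      rw [show p = (p - 1) + 1 by ring, Real.rpow_add' (norm_nonneg z) (by intro hc; linarith),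
        Real.rpow_one]
      ring_nf
    have hgint : Integrable (fun x => χ x * (inner ℝ (α x (v x)) (v x) : ℝ)) (volume.restrict Ωl) := by
      refine Integrable.mono (g := fun x => c1 * (χ x * ‖v x‖ ^ p) + χ x * (c2 x * ‖v x‖))
        ((hχvp.const_mul c1).add hχ2) hgm ?_
      filter_upwards [ae_restrict_mem hΩlm] with x hx
      have hxa : ‖α x (v x)‖ ≤ c1 * ‖v x‖ ^ (p - 1) + c2 x := hgrowth x (hsub hx) (v x)
      have h1 : |(inner ℝ (α x (v x)) (v x) : ℝ)| ≤ (c1 * ‖v x‖ ^ (p - 1) + c2 x) * ‖v x‖ :=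
        (abs_real_inner_le_norm _ _).trans (mul_le_mul_of_nonneg_right hxa (norm_nonneg _))
      have h2 : (c1 * ‖v x‖ ^ (p - 1) + c2 x) * ‖v x‖
          = c1 * ‖v x‖ ^ p + c2 x * ‖v x‖ := by
        rw [add_mul, mul_assoc, hrp]
      have h3 : ‖χ x * (inner ℝ (α x (v x)) (v x) : ℝ)‖
          ≤ χ x * (c1 * ‖v x‖ ^ p + c2 x * ‖v x‖) := by
        rw [Real.norm_eq_abs, abs_mul, abs_of_nonneg (hχnn x)]
        refine mul_le_mul_of_nonneg_left ?_ (hχnn x)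
        rw [← h2]; exact h1
      refine h3.trans ?_
      have h4 : χ x * (c1 * ‖v x‖ ^ p + c2 x * ‖v x‖)
          = c1 * (χ x * ‖v x‖ ^ p) + χ x * (c2 x * ‖v x‖) := by ring
      rw [h4, Real.norm_eq_abs]
      exact le_abs_self _
    -- integrability of χ c4 and the c4 estimates
    have hc4l : Integrable c4 (volume.restrict Ωl) := hc4mem.mono_measure (Measure.restrict_mono hsub le_rfl)
    have hc4abs : Integrable (fun x => |c4 x|) (volume.restrict Ωl) := hc4l.abs
    have hχc4 : Integrable (fun x => χ x * c4 x) (volume.restrict Ωl) := by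
      refine Integrable.mono (g := fun x => CM' * |c4 x|) (hc4abs.const_mul CM')
        (hχm.aemeasurable.aestronglyMeasurable.mul hc4l.1) ?_
      filter_upwards [ae_restrict_mem hΩlm] with x hx
      have hb : |χ x| ≤ CM' := by simpa [Real.norm_eq_abs] using hχbd x hx
      rw [Real.norm_eq_abs, abs_mul, Real.norm_eq_abs, abs_mul, abs_of_nonneg hCM'nn,
        abs_abs]
      exact mul_le_mul_of_nonneg_right hb (abs_nonneg _)
    -- coercivity estimate pointwise, integrated
    have step1 : c3 * (∫ x in Ωl, χ x * ‖v x‖ ^ p) - (∫ x in Ωl, χ x * c4 x)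
        ≤ ∫ x in Ωl, χ x * (inner ℝ (α x (v x)) (v x) : ℝ) := by
      have hint : Integrable (fun x => c3 * (χ x * ‖v x‖ ^ p) - χ x * c4 x) (volume.restrict Ωl) :=
        (hχvp.const_mul c3).sub hχc4
      have hmono := integral_mono_ae hint hgint ?_
      · rw [integral_sub (hχvp.const_mul c3) hχc4, integral_const_mul] at hmono
        exact hmono
      · filter_upwards [ae_restrict_mem hΩlm] with x hx
        have := hαcoer x (hsub hx) (v x)
        have h1 : χ x * (c3 * ‖v x‖ ^ p - c4 x) ≤ χ x * (inner ℝ (α x (v x)) (v x) : ℝ) :=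
          mul_le_mul_of_nonneg_left this (hχnn x)
        calc c3 * (χ x * ‖v x‖ ^ p) - χ x * c4 x
            = χ x * (c3 * ‖v x‖ ^ p - c4 x) := by ring
          _ ≤ _ := h1
    have step2 : (∫ x in Ωl, χ x * c4 x) ≤ Mr * ∫ x in Ωl, |c4 x| := by
      rw [← integral_const_mul]
      refine integral_mono_ae hχc4 (hc4abs.const_mul Mr) ?_
      filter_upwards [hχle] with x hx
      calc χ x * c4 x ≤ χ x * |c4 x| := mul_le_mul_of_nonneg_left (le_abs_self _) (hχnn x)
        _ ≤ Mr * |c4 x| := mul_le_mul_of_nonneg_right hx (abs_nonneg _)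
    -- replace du by v in the goal
    have e1 : (∫ x in Ωl, χ x * ‖du x‖ ^ p) = ∫ x in Ωl, χ x * ‖v x‖ ^ p :=
      integral_congr_ae (hcongr fun _ z => ‖z‖ ^ p)
    have e2 : (∫ x in Ωl, χ x * (inner ℝ (α x (du x)) (du x) : ℝ))
        = ∫ x in Ωl, χ x * (inner ℝ (α x (v x)) (v x) : ℝ) :=
      integral_congr_ae (hcongr fun x z => (inner ℝ (α x z) z : ℝ))
    rw [real_inner_self_eq_norm_sq, e1, e2]
    have hfin : c3 * (∫ x in Ωl, χ x * ‖v x‖ ^ p) - Mr * (∫ x in Ωl, |c4 x|)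
        ≤ ∫ x in Ωl, χ x * (inner ℝ (α x (v x)) (v x) : ℝ) := by linarith
    nlinarith [mul_le_mul_of_nonneg_left hfin hh.le]
  refine ⟨main, fun C => ?_⟩
  obtain ⟨R, hRq⟩ := coercive_aux p C
    (h * Mr * ∫ x in Ωl, |c4 x|) (c3 * h) hp (mul_pos hc3 hh)
    (by positivity)
  refine ⟨R, fun u du hdu hR => ?_⟩
  have hmain := main u du hdu
  have hTnn : 0 ≤ ∫ x in Ωl, χ x * ‖du x‖ ^ p :=
    integral_nonneg fun x => mul_nonneg (hχnn x) (Real.rpow_nonneg (norm_nonneg _) p)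
  have hbp : ((∫ x in Ωl, χ x * ‖du x‖ ^ p) ^ (1 / p)) ^ p = ∫ x in Ωl, χ x * ‖du x‖ ^ p := by
    rw [← Real.rpow_mul hTnn, one_div, inv_mul_cancel₀ hp0.ne', Real.rpow_one]
  refine hRq ‖u‖ ((∫ x in Ωl, χ x * ‖du x‖ ^ p) ^ (1 / p)) _ (norm_nonneg u)
    (Real.rpow_nonneg hTnn _) ?_ hR
  rw [hbp]
  linarith
end
end

section
/- Let f₁,…,f_s : D(f_ℓ) ⊆ H → H be maximal dissipative operators on a Hilbert space H. Then for every h > 0 the Lie-splitting operator P_h = (I − h f_s)⁻¹ ⋯ (I − h f₁)⁻¹ : H → H is nonexpansive, and for every u ∈ ⋂_ℓ D(f_ℓ) one has lim_{h→0} (1/h)(P_h − I)u = Σ_{ℓ=1}^s f_ℓ u in H. -/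
/-!
A resolvent `J_h = (I - h f)⁻¹` of a dissipative `f` is nonexpansive, hence so is any composition
of resolvents. For `u ∈ D`, the values `f (J_h u)` converge to `f u` as `h ↓ 0`: their norms
increase as `h` decreases and are bounded by `‖f u‖`, dissipativity turns this into the Cauchy
property, and maximality identifies the limit. Consistency then passes through the composition one
factor at a time: if `(w_h - u) / h → z` then `(J_h w_h - u) / h → z + f u`, because
`J_h (u + h z)` is the resolvent of the dissipative operator `f + z` applied to `u`, and replacing
`u + h z` by `w_h` costs `o(h)` by nonexpansiveness.
-/

open Filter Topology Set

theorem cauchy_map_of_dist_sq_le {α β : Type*} [PseudoMetricSpace β] {l : Filter α} [l.NeBot]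
    {F : α → β} {g : α → ℝ} {c : ℝ} (hg : Tendsto g l (𝓝 c))
    (hF : ∀ᶠ p in l ×ˢ l, dist (F p.1) (F p.2) ^ 2 ≤ dist (g p.1) (g p.2)) :
    Cauchy (map F l) := by
  rw [cauchy_map_iff', tendsto_uniformity_iff_dist_tendsto_zero]
  have hg0 := tendsto_uniformity_iff_dist_tendsto_zero.1 (cauchy_map_iff'.1 hg.cauchy_map)
  have hsqrt := (Real.continuous_sqrt.tendsto' 0 0 Real.sqrt_zero).comp hg0
  refine squeeze_zero' (Eventually.of_forall fun _ => dist_nonneg) ?_ hsqrt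
  filter_upwards [hF] with p hp
  exact Real.le_sqrt_of_sq_le hp

def lieSplitting {ι X : Type*} (J : ι → ℝ → X → X) (L : List ι) (h : ℝ) : X → X :=
  (L.map fun ℓ => J ℓ h).foldl (fun acc Φ => Φ ∘ acc) id

@[simp]
theorem lieSplitting_nil {ι X : Type*} (J : ι → ℝ → X → X) (h : ℝ) :
    lieSplitting J [] h = id :=
  rfl

@[simp]
theorem lieSplitting_append_singleton {ι X : Type*} (J : ι → ℝ → X → X) (L : List ι) (ℓ : ι)
    (h : ℝ) : lieSplitting J (L ++ [ℓ]) h = J ℓ h ∘ lieSplitting J L h := by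
  simp [lieSplitting]

section Dissipative

variable {H : Type*} [NormedAddCommGroup H] [InnerProductSpace ℝ H]

def IsDissipativeOn (D : Set H) (f : H → H) : Prop :=
  ∀ u ∈ D, ∀ v ∈ D, inner ℝ (f u - f v) (u - v) ≤ 0

/-- `J h = (I - h f)⁻¹`; its existence for every `h > 0` is the maximality of `f`. -/
def IsResolvent (D : Set H) (f : H → H) (J : ℝ → H → H) : Prop :=
  ∀ h : ℝ, 0 < h → ∀ w, J h w ∈ D ∧ J h w - h • f (J h w) = w

theorem IsDissipativeOn.add_const {D : Set H} {f : H → H} (hf : IsDissipativeOn D f) (z : H) :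
    IsDissipativeOn D (fun x => f x + z) := by
  intro u hu v hv
  simpa only [add_sub_add_right_eq_sub] using hf u hu v hv

namespace IsResolvent

variable {D : Set H} {f : H → H} {J : ℝ → H → H} {h : ℝ}

theorem mem (hJ : IsResolvent D f J) (hh : 0 < h) (w : H) : J h w ∈ D :=
  (hJ h hh w).1

theorem sub_eq_smul (hJ : IsResolvent D f J) (hh : 0 < h) (w : H) :
    J h w - w = h • f (J h w) := by
  rw [sub_eq_iff_eq_add', ← sub_eq_iff_eq_add, (hJ h hh w).2]

theorem shift (hJ : IsResolvent D f J) (z : H) :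
    IsResolvent D (fun x => f x + z) (fun h v => J h (v + h • z)) := by
  intro h hh v
  refine ⟨hJ.mem hh _, ?_⟩
  rw [smul_add, sub_add_eq_sub_sub, (hJ h hh _).2, add_sub_cancel_right]

theorem norm_sub_le (hJ : IsResolvent D f J) (hf : IsDissipativeOn D f) (hh : 0 < h)
    (w w' : H) : ‖J h w - J h w'‖ ≤ ‖w - w'‖ := by
  set a := J h w
  set b := J h w'
  have hab : a - b = (w - w') + h • (f a - f b) := by
    rw [← (hJ h hh w).2, ← (hJ h hh w').2, smul_sub]
    abel
  have hsq : ‖a - b‖ ^ 2 ≤ ‖a - b‖ * ‖w - w'‖ := calc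
    ‖a - b‖ ^ 2 = inner ℝ (a - b) (w - w') + h * inner ℝ (f a - f b) (a - b) := by
      rw [← real_inner_self_eq_norm_sq]
      nth_rewrite 2 [hab]
      rw [inner_add_right, real_inner_smul_right, real_inner_comm (f a - f b)]
    _ ≤ inner ℝ (a - b) (w - w') := by
      nlinarith [hf a (hJ.mem hh w) b (hJ.mem hh w')]
    _ ≤ ‖a - b‖ * ‖w - w'‖ := real_inner_le_norm _ _
  nlinarith [norm_nonneg (a - b), norm_nonneg (w - w')]

theorem norm_apply_le (hJ : IsResolvent D f J) (hf : IsDissipativeOn D f) (hh : 0 < h)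
    {u : H} (hu : u ∈ D) : ‖f (J h u)‖ ≤ ‖f u‖ := by
  have hdis := hf _ (hJ.mem hh u) u hu
  rw [hJ.sub_eq_smul hh u, real_inner_smul_right, inner_sub_left,
    real_inner_self_eq_norm_sq] at hdis
  have hsq : ‖f (J h u)‖ ^ 2 ≤ ‖f u‖ * ‖f (J h u)‖ :=
    (sub_nonpos.1 (nonpos_of_mul_nonpos_right hdis hh)).trans (real_inner_le_norm _ _)
  nlinarith [norm_nonneg (f (J h u)), norm_nonneg (f u)]

/-- Dissipativity at `J lam w` and `J mu w`, whose difference is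
`lam • f (J lam w) - mu • f (J mu w)`. -/
theorem inner_apply_ge (hJ : IsResolvent D f J) (hf : IsDissipativeOn D f) {lam mu : ℝ}
    (hlam : 0 < lam) (hmu : 0 < mu) (w : H) :
    lam * ‖f (J lam w)‖ ^ 2 + mu * ‖f (J mu w)‖ ^ 2
      ≤ (lam + mu) * inner ℝ (f (J lam w)) (f (J mu w)) := by
  have hdiff : J lam w - J mu w = lam • f (J lam w) - mu • f (J mu w) := by
    rw [← hJ.sub_eq_smul hlam, ← hJ.sub_eq_smul hmu, sub_sub_sub_cancel_right]
  have hdis := hf _ (hJ.mem hlam w) _ (hJ.mem hmu w)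
  rw [hdiff, inner_sub_left, inner_sub_right, inner_sub_right, real_inner_smul_right,
    real_inner_smul_right, real_inner_smul_right, real_inner_smul_right,
    real_inner_self_eq_norm_sq, real_inner_self_eq_norm_sq,
    real_inner_comm (f (J lam w)) (f (J mu w))] at hdis
  linarith

theorem norm_apply_le_of_le (hJ : IsResolvent D f J) (hf : IsDissipativeOn D f) {lam mu : ℝ}
    (hlam : 0 < lam) (hle : lam ≤ mu) (w : H) : ‖f (J mu w)‖ ≤ ‖f (J lam w)‖ := by
  have key := hJ.inner_apply_ge hf hlam (hlam.trans_le hle) w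
  have hcs := real_inner_le_norm (f (J lam w)) (f (J mu w))
  by_contra! hlt
  have hpos : 0 < mu * ‖f (J mu w)‖ - lam * ‖f (J lam w)‖ := by
    nlinarith [norm_nonneg (f (J lam w))]
  nlinarith [mul_pos (sub_pos.2 hlt) hpos]

theorem norm_apply_sub_sq_le (hJ : IsResolvent D f J) (hf : IsDissipativeOn D f) {lam mu : ℝ}
    (hlam : 0 < lam) (hmu : 0 < mu) (w : H) :
    ‖f (J lam w) - f (J mu w)‖ ^ 2 ≤ |‖f (J lam w)‖ ^ 2 - ‖f (J mu w)‖ ^ 2| := by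
  have key := hJ.inner_apply_ge hf hlam hmu w
  set a := ‖f (J lam w)‖ ^ 2
  set b := ‖f (J mu w)‖ ^ 2
  have hbound : (mu - lam) * (a - b) ≤ (lam + mu) * |a - b| := calc
    (mu - lam) * (a - b) ≤ |mu - lam| * |a - b| := by
      rw [← abs_mul]; exact le_abs_self _
    _ ≤ (lam + mu) * |a - b| := by
      gcongr; exact abs_sub_le_iff.2 ⟨by linarith, by linarith⟩
  rw [norm_sub_sq_real]
  refine le_of_mul_le_mul_left ?_ (add_pos hlam hmu)
  nlinarith

/-- Minty's trick: the graph of a maximal dissipative operator is closed. -/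
theorem apply_eq_of_tendsto (hJ : IsResolvent D f J) (hf : IsDissipativeOn D f) {α : Type*}
    {l : Filter α} [l.NeBot] {x : α → H} {u y : H} (hxD : ∀ᶠ a in l, x a ∈ D)
    (hx : Tendsto x l (𝓝 u)) (hfx : Tendsto (fun a => f (x a)) l (𝓝 y)) : u ∈ D ∧ f u = y := by
  set v := J 1 (u - y)
  have hvu : v - u = f v - y := by
    have hv := (hJ 1 one_pos (u - y)).2
    rw [one_smul] at hv
    exact sub_eq_sub_iff_sub_eq_sub.2 hv
  have hle : inner ℝ (f v - y) (v - u) ≤ 0 :=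
    le_of_tendsto ((tendsto_const_nhds.sub hfx).inner (tendsto_const_nhds.sub hx))
      (hxD.mono fun a ha => hf v (hJ.mem one_pos _) (x a) ha)
  rw [hvu, real_inner_self_nonpos, sub_eq_zero] at hle
  rw [hle, sub_self, sub_eq_zero] at hvu
  exact ⟨hvu ▸ hJ.mem one_pos _, hvu ▸ hle⟩

theorem tendsto_self (hJ : IsResolvent D f J) (hf : IsDissipativeOn D f) {u : H} (hu : u ∈ D) :
    Tendsto (fun h => J h u) (𝓝[>] 0) (𝓝 u) := by
  rw [tendsto_iff_norm_sub_tendsto_zero]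
  have hlin : Tendsto (fun h : ℝ => h * ‖f u‖) (𝓝[>] 0) (𝓝 0) := by
    simpa using (tendsto_id.mul_const ‖f u‖).mono_left (nhdsWithin_le_nhds (a := (0 : ℝ)))
  refine squeeze_zero' (Eventually.of_forall fun _ => norm_nonneg _) ?_ hlin
  filter_upwards [self_mem_nhdsWithin] with h (hh : 0 < h)
  rw [hJ.sub_eq_smul hh, norm_smul, Real.norm_of_nonneg hh.le]
  exact mul_le_mul_of_nonneg_left (hJ.norm_apply_le hf hh hu) hh.le

theorem tendsto_apply [CompleteSpace H] (hJ : IsResolvent D f J) (hf : IsDissipativeOn D f)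
    {u : H} (hu : u ∈ D) : Tendsto (fun h => f (J h u)) (𝓝[>] 0) (𝓝 (f u)) := by
  set g : ℝ → ℝ := fun h => ‖f (J h u)‖ ^ 2
  have hanti : AntitoneOn g (Ioi 0) := fun lam hlam mu _ hle =>
    pow_le_pow_left₀ (norm_nonneg _) (hJ.norm_apply_le_of_le hf hlam hle u) 2
  have hbdd : BddAbove (g '' Ioi 0) := ⟨‖f u‖ ^ 2, by
    rintro _ ⟨h, hh, rfl⟩
    exact pow_le_pow_left₀ (norm_nonneg _) (hJ.norm_apply_le hf hh hu) 2⟩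
  have hcauchy : Cauchy (map (fun h => f (J h u)) (𝓝[>] 0)) := by
    refine cauchy_map_of_dist_sq_le (hanti.tendsto_nhdsGT hbdd) ?_
    filter_upwards [prod_mem_prod self_mem_nhdsWithin self_mem_nhdsWithin]
      with ⟨lam, mu⟩ ⟨hlam, hmu⟩
    rw [dist_eq_norm, Real.dist_eq]
    exact hJ.norm_apply_sub_sq_le hf hlam hmu u
  obtain ⟨y, hy⟩ := cauchy_map_iff_exists_tendsto.1 hcauchy
  have hJD : ∀ᶠ h in 𝓝[>] (0 : ℝ), J h u ∈ D :=
    eventually_mem_nhdsWithin.mono fun _ hh => hJ.mem hh u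
  rwa [(hJ.apply_eq_of_tendsto hf hJD (hJ.tendsto_self hf hu) hy).2]

theorem tendsto_inv_smul_sub [CompleteSpace H] (hJ : IsResolvent D f J)
    (hf : IsDissipativeOn D f) {u z : H} (hu : u ∈ D) {w : ℝ → H}
    (hw : Tendsto (fun h => h⁻¹ • (w h - u)) (𝓝[>] 0) (𝓝 z)) :
    Tendsto (fun h => h⁻¹ • (J h (w h) - u)) (𝓝[>] 0) (𝓝 (z + f u)) := by
  have hshift := (hJ.shift z).tendsto_apply (hf.add_const z) hu
  have hrem : Tendsto (fun h => h⁻¹ • (J h (w h) - J h (u + h • z))) (𝓝[>] 0) (𝓝 0) := by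
    refine squeeze_zero_norm' ?_ (tendsto_iff_norm_sub_tendsto_zero.1 hw)
    filter_upwards [self_mem_nhdsWithin] with h (hh : 0 < h)
    have hinv : 0 ≤ h⁻¹ := inv_nonneg.2 hh.le
    calc ‖h⁻¹ • (J h (w h) - J h (u + h • z))‖
        = h⁻¹ * ‖J h (w h) - J h (u + h • z)‖ := norm_smul_of_nonneg hinv _
      _ ≤ h⁻¹ * ‖w h - (u + h • z)‖ := by gcongr; exact hJ.norm_sub_le hf hh _ _
      _ = ‖h⁻¹ • (w h - u) - z‖ := by
        rw [← norm_smul_of_nonneg hinv, smul_sub, smul_add, smul_smul,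
          inv_mul_cancel₀ hh.ne', one_smul, sub_add_eq_sub_sub, smul_sub]
  have hsum := hshift.add hrem
  rw [add_zero, add_comm] at hsum
  refine hsum.congr' ?_
  filter_upwards [self_mem_nhdsWithin] with h (hh : 0 < h)
  have hJs := (hJ.shift z).sub_eq_smul hh u
  rw [← sub_add_sub_cancel (J h (w h)) (J h (u + h • z)) u, smul_add, hJs, smul_smul,
    inv_mul_cancel₀ hh.ne', one_smul, add_comm]

end IsResolvent

section LieSplitting

variable {ι : Type*} {D : ι → Set H} {f : ι → H → H} {J : ι → ℝ → H → H}

theorem norm_lieSplitting_sub_le (hJ : ∀ ℓ, IsResolvent (D ℓ) (f ℓ) (J ℓ))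
    (hf : ∀ ℓ, IsDissipativeOn (D ℓ) (f ℓ)) (L : List ι) {h : ℝ} (hh : 0 < h) (u v : H) :
    ‖lieSplitting J L h u - lieSplitting J L h v‖ ≤ ‖u - v‖ := by
  induction L using List.reverseRecOn with
  | nil => simp
  | append_singleton L ℓ ih =>
    simp only [lieSplitting_append_singleton, Function.comp_apply]
    exact ((hJ ℓ).norm_sub_le (hf ℓ) hh _ _).trans ih

theorem tendsto_lieSplitting [CompleteSpace H] (hJ : ∀ ℓ, IsResolvent (D ℓ) (f ℓ) (J ℓ))
    (hf : ∀ ℓ, IsDissipativeOn (D ℓ) (f ℓ)) (L : List ι) {u : H} (hu : ∀ ℓ, u ∈ D ℓ) :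
    Tendsto (fun h => h⁻¹ • (lieSplitting J L h u - u)) (𝓝[>] 0)
      (𝓝 (L.map fun ℓ => f ℓ u).sum) := by
  induction L using List.reverseRecOn with
  | nil => simp
  | append_singleton L ℓ ih =>
    simpa using (hJ ℓ).tendsto_inv_smul_sub (hf ℓ) (hu ℓ) ih

end LieSplitting

end Dissipative

theorem lie_splitting_nonexpansive_consistent_general {H : Type*}
    [NormedAddCommGroup H] [InnerProductSpace ℝ H] [CompleteSpace H]
    {s : ℕ}
    (D : Fin s → Set H) (f : Fin s → H → H)
    (hdiss : ∀ ℓ, ∀ u ∈ D ℓ, ∀ v ∈ D ℓ, (inner ℝ (f ℓ u - f ℓ v) (u - v) : ℝ) ≤ 0)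
    -- `J ℓ h` is the resolvent `(I - h f_ℓ)⁻¹`
    (J : Fin s → ℝ → H → H)
    (hJ : ∀ ℓ (h : ℝ), 0 < h → ∀ w : H, J ℓ h w ∈ D ℓ ∧ J ℓ h w - h • f ℓ (J ℓ h w) = w) :
    -- the Lie-splitting operator `P h = (I - h f_s)⁻¹ ∘ ⋯ ∘ (I - h f₁)⁻¹`
    let P : ℝ → H → H := fun h =>
      (List.ofFn fun ℓ : Fin s => J ℓ h).foldl (fun acc Φ => Φ ∘ acc) id
    (∀ h : ℝ, 0 < h → ∀ u v : H, ‖P h u - P h v‖ ≤ ‖u - v‖) ∧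
    (∀ u : H, (∀ ℓ, u ∈ D ℓ) →
      Tendsto (fun h : ℝ => h⁻¹ • (P h u - u)) (nhdsWithin 0 (Set.Ioi 0))
        (nhds (∑ ℓ : Fin s, f ℓ u))) := by
  intro P
  have hP : P = lieSplitting J (List.finRange s) := by
    funext h
    simp [P, lieSplitting, List.ofFn_eq_map]
  have hsum (u : H) : ((List.finRange s).map fun ℓ => f ℓ u).sum = ∑ ℓ, f ℓ u := by
    rw [← List.ofFn_eq_map, List.sum_ofFn]
  rw [hP]
  exact ⟨fun h hh u v => norm_lieSplitting_sub_le hJ hdiss _ hh u v,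
    fun u hu => hsum u ▸ tendsto_lieSplitting hJ hdiss _ hu⟩

/-- for maximal dissipative operators `f₁,…,f_s` on a Hilbert space,
the Lie-splitting operator `P_h = (I - h f_s)⁻¹ ⋯ (I - h f₁)⁻¹` is nonexpansive for
every `h > 0`, and `(1/h)(P_h - I)u → Σ_ℓ f_ℓ u` as `h → 0⁺` for `u ∈ ⋂_ℓ D(f_ℓ)`. -/
theorem lie_splitting_nonexpansive_consistent {H : Type*}
    [NormedAddCommGroup H] [InnerProductSpace ℝ H] [CompleteSpace H]
    {s : ℕ} (hs : 0 < s)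
    (D : Fin s → Set H) (f : Fin s → H → H)
    (hdiss : ∀ ℓ, ∀ u ∈ D ℓ, ∀ v ∈ D ℓ, (inner ℝ (f ℓ u - f ℓ v) (u - v) : ℝ) ≤ 0)
    (hmax : ∀ ℓ, ∀ h : ℝ, 0 < h → ∀ w : H, ∃ u ∈ D ℓ, u - h • f ℓ u = w)
    -- `J ℓ h` is the resolvent `(I - h f_ℓ)⁻¹`
    (J : Fin s → ℝ → H → H)
    (hJ : ∀ ℓ (h : ℝ), 0 < h → ∀ w : H, J ℓ h w ∈ D ℓ ∧ J ℓ h w - h • f ℓ (J ℓ h w) = w) :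
    -- the Lie-splitting operator `P h = (I - h f_s)⁻¹ ∘ ⋯ ∘ (I - h f₁)⁻¹`
    let P : ℝ → H → H := fun h =>
      (List.ofFn fun ℓ : Fin s => J ℓ h).foldl (fun acc Φ => Φ ∘ acc) id
    (∀ h : ℝ, 0 < h → ∀ u v : H, ‖P h u - P h v‖ ≤ ‖u - v‖) ∧
    (∀ u : H, (∀ ℓ, u ∈ D ℓ) →
      Tendsto (fun h : ℝ => h⁻¹ • (P h u - u)) (nhdsWithin 0 (Set.Ioi 0))
        (nhds (∑ ℓ : Fin s, f ℓ u))) :=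
  lie_splitting_nonexpansive_consistent_general D f hdiss J hJ
end

section
/- For the porous-medium type equation with pivot space H = H^{-1}(Ω), partition of unity {χ_ℓ} ⊂ W^{1,∞}(Ω), and Friedrich extensions f (of u ↦ Δα(u)) and f_ℓ (of u ↦ Δ(χ_ℓ α(u))), the equality ⋂_{ℓ=1}^s D(f_ℓ) = D(f) holds, where D(f) = {u ∈ (L^{p/(p-1)}(Ω))* : α(δ_p u) ∈ H¹₀(Ω)} and fu = Δα(δ_p u). -/
open MeasureTheory ENNReal Filter Topology

noncomputable section

section Helpers



namespace PMAux

variable {X : Type*} [MeasurableSpace X] {μ : Measure X} {p q : ℝ≥0∞}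

lemma one_div_one_eq (hpq : p⁻¹ + q⁻¹ = 1) : (1 : ℝ≥0∞) / 1 = 1 / q + 1 / p := by
  rw [one_div, one_div, one_div, inv_one, ← hpq, add_comm]

lemma holder_int (hpq : p⁻¹ + q⁻¹ = 1) {f g : X → ℝ} (hf : MemLp f p μ) (hg : MemLp g q μ) :
    Integrable (fun x => f x * g x) μ := by
  have h : MemLp (g • f) 1 μ := by haveI : ENNReal.HolderTriple q p 1 := ⟨by rw [inv_one, add_comm, hpq]⟩; exact hf.smul hg
  have := memLp_one_iff_integrable.mp h
  exact this.congr (Eventually.of_forall fun x => by simp only [Pi.smul_apply, smul_eq_mul, Pi.mul_apply]; ring)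

lemma holder_bound (hpq : p⁻¹ + q⁻¹ = 1) {f g : X → ℝ} (hf : MemLp f p μ) (hg : MemLp g q μ) :
    |∫ x, f x * g x ∂μ| ≤ (eLpNorm f p μ).toReal * (eLpNorm g q μ).toReal := by
  have h1 : |∫ x, f x * g x ∂μ| ≤ ∫ x, ‖f x * g x‖ ∂μ := by
    rw [← Real.norm_eq_abs]; exact norm_integral_le_integral_norm _
  refine h1.trans ?_
  have h2 : ∫ x, ‖f x * g x‖ ∂μ = (∫⁻ x, ‖f x * g x‖₊ ∂μ).toReal :=
    integral_norm_eq_lintegral_enorm (hf.1.mul hg.1)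
  rw [h2]
  have h3 : (∫⁻ x, ‖f x * g x‖₊ ∂μ) = eLpNorm (g • f) 1 μ := by
    rw [eLpNorm_one_eq_lintegral_enorm]
    refine lintegral_congr fun x => ?_
    simp [Pi.smul_apply, smul_eq_mul, mul_comm, enorm_eq_nnnorm]
  rw [h3]
  have h4 : eLpNorm (g • f) 1 μ ≤ eLpNorm g q μ * eLpNorm f p μ :=
    by haveI : ENNReal.HolderTriple q p 1 := ⟨by rw [inv_one, add_comm, hpq]⟩; exact eLpNorm_smul_le_mul_eLpNorm hf.1 hg.1
  have h5 : eLpNorm g q μ * eLpNorm f p μ ≠ ∞ :=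
    ENNReal.mul_ne_top hg.eLpNorm_ne_top hf.eLpNorm_ne_top
  calc (eLpNorm (g • f) 1 μ).toReal ≤ (eLpNorm g q μ * eLpNorm f p μ).toReal :=
        ENNReal.toReal_mono h5 h4
    _ = (eLpNorm f p μ).toReal * (eLpNorm g q μ).toReal := by
        rw [ENNReal.toReal_mul]; ring

lemma ae_zero_of_test (hpq : p⁻¹ + q⁻¹ = 1) [IsFiniteMeasure μ] (hq1 : 1 ≤ q) {G : X → ℝ}
    (hG : MemLp G q μ) (h : ∀ t : X → ℝ, MemLp t p μ → ∫ x, G x * t x ∂μ = 0) :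
    G =ᵐ[μ] 0 := by
  refine (hG.integrable hq1).ae_eq_zero_of_forall_setIntegral_eq_zero fun s hs _ => ?_
  have ht : MemLp (s.indicator fun _ => (1 : ℝ)) p μ :=
    memLp_indicator_const p hs 1 (Or.inr (measure_ne_top μ s))
  have h0 := h _ ht
  have : ∫ x, G x * s.indicator (fun _ => (1 : ℝ)) x ∂μ = ∫ x in s, G x ∂μ := by
    rw [← integral_indicator hs]
    refine integral_congr_ae (Eventually.of_forall fun x => ?_)
    by_cases hx : x ∈ s <;> simp [Set.indicator_of_mem, Set.indicator_of_notMem, hx]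
  rw [this] at h0
  exact h0

/-- pairing with a fixed `L^p` function, as a continuous linear functional on `Lp q`. -/
def pairing [Fact (1 ≤ q)] (hpq : p⁻¹ + q⁻¹ = 1) {G : X → ℝ} (hG : MemLp G p μ) : Lp ℝ q μ →L[ℝ] ℝ :=
  LinearMap.mkContinuous
    { toFun := fun f => ∫ x, G x * f x ∂μ
      map_add' := by
        intro f g
        have h1 : Integrable (fun x => G x * f x) μ := holder_int hpq hG (Lp.memLp f)
        have h2 : Integrable (fun x => G x * g x) μ := holder_int hpq hG (Lp.memLp g)
        have : ∫ x, G x * (↑(f + g) : X → ℝ) x ∂μ = ∫ x, (G x * f x + G x * g x) ∂μ := by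
          refine integral_congr_ae ?_
          filter_upwards [Lp.coeFn_add f g] with x hx
          rw [hx]; simp [mul_add]
        rw [this, integral_add h1 h2]
      map_smul' := by
        intro c f
        have : ∫ x, G x * (↑(c • f) : X → ℝ) x ∂μ = ∫ x, c * (G x * f x) ∂μ := by
          refine integral_congr_ae ?_
          filter_upwards [Lp.coeFn_smul c f] with x hx
          rw [hx]; simp [smul_eq_mul]; ring
        simp only [RingHom.id_apply, smul_eq_mul]
        rw [this, integral_const_mul] }
    ((eLpNorm G p μ).toReal)
    (by
      intro f
      have := holder_bound hpq hG (Lp.memLp f)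
      rw [Real.norm_eq_abs]
      calc |∫ x, G x * f x ∂μ| ≤ (eLpNorm G p μ).toReal * (eLpNorm (f : X → ℝ) q μ).toReal :=
            this
        _ = (eLpNorm G p μ).toReal * ‖f‖ := by rw [Lp.norm_def])

@[simp] lemma pairing_apply [Fact (1 ≤ q)] (hpq : p⁻¹ + q⁻¹ = 1) {G : X → ℝ} (hG : MemLp G p μ) (f : Lp ℝ q μ) :
    pairing hpq hG f = ∫ x, G x * f x ∂μ := rfl

lemma ae_zero_of_dense [Fact (1 ≤ q)] (hpq : p⁻¹ + q⁻¹ = 1) [IsFiniteMeasure μ] (hp1 : 1 ≤ p) {G : X → ℝ}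
    (hG : MemLp G p μ) {W : Type*} [NormedAddCommGroup W] [NormedSpace ℝ W]
    (ι : W →L[ℝ] Lp ℝ q μ) (hιdense : DenseRange ι)
    (h : ∀ φ : W, ∫ x, G x * (ι φ : X → ℝ) x ∂μ = 0) : G =ᵐ[μ] 0 := by
  have key : (pairing hpq hG : Lp ℝ q μ → ℝ) = (0 : Lp ℝ q μ →L[ℝ] ℝ) := by
    refine Continuous.ext_on hιdense (pairing hpq hG).continuous (map_continuous _) ?_
    rintro _ ⟨φ, rfl⟩
    simpa using h φ
  refine ae_zero_of_test (by rwa [add_comm]) hp1 hG fun t ht => ?_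
  have h1 : ∫ x, G x * t x ∂μ = ∫ x, G x * (ht.toLp t : X → ℝ) x ∂μ := by
    refine integral_congr_ae ?_
    filter_upwards [ht.coeFn_toLp] with x hx
    rw [hx]
  rw [h1]
  have := congrFun key (ht.toLp t)
  simpa using this

end PMAux



namespace PMAux2

variable {X : Type*} [MeasurableSpace X] {μ : Measure X} {χ : X → ℝ}

lemma wmeas_le (hχm : Measurable χ) (hχ1 : ∀ᵐ x ∂μ, χ x ≤ 1) :
    μ.withDensity (fun x => ENNReal.ofReal (χ x)) ≤ μ := by
  rw [Measure.le_iff]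
  intro s hs
  rw [withDensity_apply _ hs]
  calc ∫⁻ x in s, ENNReal.ofReal (χ x) ∂μ ≤ ∫⁻ _ in s, 1 ∂μ := by
        refine lintegral_mono_ae ?_
        filter_upwards [ae_restrict_of_ae hχ1] with x hx
        exact ENNReal.ofReal_le_one.mpr hx
    _ = μ s := by simp

lemma ae_of_wae (hχm : Measurable χ) (hχ0 : ∀ x, 0 ≤ χ x) {P : X → Prop}
    (h : ∀ᵐ x ∂(μ.withDensity fun x => ENNReal.ofReal (χ x)), P x) :
    ∀ᵐ x ∂μ, χ x ≠ 0 → P x := by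
  set ρ : X → ℝ≥0∞ := fun x => ENNReal.ofReal (χ x) with hρ
  have hρm : Measurable ρ := hχm.ennreal_ofReal
  rw [ae_iff] at h
  set N := toMeasurable (μ.withDensity ρ) {x | ¬P x} with hN
  have hNm : MeasurableSet N := measurableSet_toMeasurable _ _
  have hN0 : (μ.withDensity ρ) N = 0 := by
    rw [hN, measure_toMeasurable]; exact h
  rw [withDensity_apply _ hNm] at hN0
  have hρ0 : ρ =ᵐ[μ.restrict N] 0 := (lintegral_eq_zero_iff hρm).mp hN0
  have h2 : ∀ᵐ x ∂μ, x ∈ N → ρ x = 0 := by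
    rw [← ae_restrict_iff' hNm]
    exact hρ0
  filter_upwards [h2] with x hx hχx
  by_contra hP
  have : x ∈ N := subset_toMeasurable _ _ hP
  have h3 := hx this
  rw [hρ, ENNReal.ofReal_eq_zero] at h3
  exact hχx (le_antisymm h3 (hχ0 x))

lemma memℒp_of_chi (hχm : Measurable χ) (hχ0 : ∀ x, 0 ≤ χ x) (hχ1 : ∀ᵐ x ∂μ, χ x ≤ 1)
    {r : ℝ≥0∞} (hr1 : 1 ≤ r.toReal) (hrt : r ≠ ∞) {h : X → ℝ}
    (hsm : AEStronglyMeasurable (fun x => χ x * h x) μ)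
    (hfin : ∫⁻ x, ENNReal.ofReal (χ x) * (‖h x‖₊ : ℝ≥0∞) ^ r.toReal ∂μ ≠ ∞) :
    MemLp (fun x => χ x * h x) r μ := by
  have hr0 : r ≠ 0 := by
    intro h0; rw [h0] at hr1; norm_num at hr1
  refine ⟨hsm, ?_⟩
  rw [eLpNorm_lt_top_iff_lintegral_rpow_enorm_lt_top hr0 hrt]
  have key : ∀ᵐ x ∂μ, (‖χ x * h x‖₊ : ℝ≥0∞) ^ r.toReal
      ≤ ENNReal.ofReal (χ x) * (‖h x‖₊ : ℝ≥0∞) ^ r.toReal := by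
    filter_upwards [hχ1] with x hx
    have e1 : (‖χ x * h x‖₊ : ℝ≥0∞) = ENNReal.ofReal (χ x) * (‖h x‖₊ : ℝ≥0∞) := by
      rw [nnnorm_mul, ENNReal.coe_mul, ← enorm_eq_nnnorm (χ x), Real.enorm_eq_ofReal (hχ0 x)]
    rw [e1, ENNReal.mul_rpow_of_nonneg _ _ (by linarith : (0:ℝ) ≤ r.toReal)]
    gcongr
    calc ENNReal.ofReal (χ x) ^ r.toReal ≤ ENNReal.ofReal (χ x) ^ (1:ℝ) :=
          ENNReal.rpow_le_rpow_of_exponent_ge (ENNReal.ofReal_le_one.mpr hx) hr1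
      _ = ENNReal.ofReal (χ x) := ENNReal.rpow_one _
  exact lt_of_le_of_lt (lintegral_mono_ae key) (lt_top_iff_ne_top.mpr hfin)

lemma chi_mul_ae_eq (hχm : Measurable χ) (hχ0 : ∀ x, 0 ≤ χ x) {v v' : X → ℝ}
    (h : ∀ᵐ x ∂μ, χ x ≠ 0 → v x = v' x) (g : X → ℝ → ℝ) :
    (fun x => χ x * g x (v x)) =ᵐ[μ] fun x => χ x * g x (v' x) := by
  filter_upwards [h] with x hx
  by_cases hc : χ x = 0
  · rw [hc]; ring
  · rw [hx hc]

lemma memℒp_chi_mul_of_w (hχm : Measurable χ) (hχ0 : ∀ x, 0 ≤ χ x) (hχ1 : ∀ᵐ x ∂μ, χ x ≤ 1)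
    {r : ℝ≥0∞} (hr1 : 1 ≤ r.toReal) (hrt : r ≠ ∞) {v : X → ℝ}
    (hv : MemLp v r (μ.withDensity fun x => ENNReal.ofReal (χ x))) :
    MemLp (fun x => χ x * v x) r μ := by
  have hr0 : r ≠ 0 := by intro h0; rw [h0] at hr1; norm_num at hr1
  set v₀ : X → ℝ := hv.1.mk v with hv₀def
  have hv₀m : Measurable v₀ := hv.1.stronglyMeasurable_mk.measurable
  have haew : v =ᵐ[μ.withDensity fun x => ENNReal.ofReal (χ x)] v₀ := hv.1.ae_eq_mk
  have hv₀ : MemLp v₀ r (μ.withDensity fun x => ENNReal.ofReal (χ x)) := hv.ae_eq haew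
  have hae : ∀ᵐ x ∂μ, χ x ≠ 0 → v x = v₀ x := ae_of_wae hχm hχ0 haew
  have heq : (fun x => χ x * v x) =ᵐ[μ] fun x => χ x * v₀ x :=
    chi_mul_ae_eq hχm hχ0 hae fun _ z => z
  refine MemLp.ae_eq heq.symm ?_
  refine memℒp_of_chi hχm hχ0 hχ1 hr1 hrt
    ((hχm.mul hv₀m).aestronglyMeasurable) ?_
  have hwd := lintegral_withDensity_eq_lintegral_mul μ hχm.ennreal_ofReal
    (hv₀m.nnnorm.coe_nnreal_ennreal.pow_const r.toReal)
  simp only [Pi.mul_apply] at hwd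
  rw [← hwd]
  exact (lintegral_rpow_enorm_lt_top_of_eLpNorm_lt_top hr0 hrt hv₀.2).ne

end PMAux2



namespace PMAux3
open PMAux2

variable {X : Type*} [MeasurableSpace X] {μ : Measure X} {χ : X → ℝ} {p q : ℝ≥0∞}

lemma q_ne_top (hp : 1 < p) (hpq : p⁻¹ + q⁻¹ = 1) : q ≠ ⊤ := by
  intro hq
  rw [hq, ENNReal.inv_top, add_zero] at hpq
  rw [ENNReal.inv_eq_one] at hpq
  exact hp.ne' hpq

lemma q_ne_zero (hpq : p⁻¹ + q⁻¹ = 1) : q ≠ 0 := by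
  intro hq
  rw [hq, ENNReal.inv_zero] at hpq
  simp [ENNReal.add_eq_top] at hpq

lemma real_conj (hp : 1 < p) (hpt : p ≠ ⊤) (hpq : p⁻¹ + q⁻¹ = 1) :
    Real.HolderConjugate p.toReal q.toReal := by
  have hp0 : p ≠ 0 := by positivity
  have hq0 : q ≠ 0 := q_ne_zero hpq
  rw [Real.holderConjugate_iff]
  constructor
  · rw [← ENNReal.toReal_one]
    exact ENNReal.toReal_strict_mono hpt hp
  · have h1 : (p⁻¹ + q⁻¹).toReal = (1 : ℝ≥0∞).toReal := by rw [hpq]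
    rw [ENNReal.toReal_add (by simp [hp0]) (by simp [hq0]), ENNReal.toReal_one,
      ENNReal.toReal_inv, ENNReal.toReal_inv] at h1
    exact h1

lemma meas_comp_alpha {α : X → ℝ → ℝ} (hm : ∀ z, Measurable fun x => α x z)
    (hc : ∀ x, Continuous (α x)) {v : X → ℝ} (hv : Measurable v) :
    Measurable fun x => α x (v x) := by
  have hu : Measurable (Function.uncurry fun (z : ℝ) (x : X) => α x z) :=
    measurable_uncurry_of_continuous_of_measurable (fun x => hc x) hm
  exact hu.comp (hv.prodMk measurable_id)

lemma memℒp_chi_abs_pow (hχm : Measurable χ) (hχ0 : ∀ x, 0 ≤ χ x) (hχ1 : ∀ᵐ x ∂μ, χ x ≤ 1)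
    (hp : 1 < p) (hpt : p ≠ ⊤) (hpq : p⁻¹ + q⁻¹ = 1) {v : X → ℝ}
    (hv : MemLp v p (μ.withDensity fun x => ENNReal.ofReal (χ x))) :
    MemLp (fun x => χ x * |v x| ^ (p.toReal - 1)) q μ := by
  have hrc := real_conj hp hpt hpq
  have hp0 : p ≠ 0 := by positivity
  have hq0 : q ≠ 0 := q_ne_zero hpq
  have hqt : q ≠ ⊤ := q_ne_top hp hpq
  have hpr1 : (0:ℝ) ≤ p.toReal - 1 := by linarith [hrc.lt]
  set v₀ : X → ℝ := hv.1.mk v with hv₀def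
  have hv₀m : Measurable v₀ := hv.1.stronglyMeasurable_mk.measurable
  have haew : v =ᵐ[μ.withDensity fun x => ENNReal.ofReal (χ x)] v₀ := hv.1.ae_eq_mk
  have hv₀ : MemLp v₀ p (μ.withDensity fun x => ENNReal.ofReal (χ x)) := hv.ae_eq haew
  have hae : ∀ᵐ x ∂μ, χ x ≠ 0 → v x = v₀ x := ae_of_wae hχm hχ0 haew
  have heq : (fun x => χ x * |v x| ^ (p.toReal - 1)) =ᵐ[μ]
      fun x => χ x * |v₀ x| ^ (p.toReal - 1) :=
    chi_mul_ae_eq hχm hχ0 hae fun _ z => |z| ^ (p.toReal - 1)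
  refine MemLp.ae_eq heq.symm ?_
  have habsm : Measurable fun x => |v₀ x| ^ (p.toReal - 1) :=
    (Real.continuous_rpow_const hpr1).measurable.comp hv₀m.abs
  refine memℒp_of_chi hχm hχ0 hχ1 hrc.symm.lt.le hqt
    ((hχm.mul habsm).aestronglyMeasurable) ?_
  have hptw : ∀ x, (‖(|v₀ x| ^ (p.toReal - 1) : ℝ)‖₊ : ℝ≥0∞) ^ q.toReal
      = (‖v₀ x‖₊ : ℝ≥0∞) ^ p.toReal := by
    intro x
    simp only [← enorm_eq_nnnorm]
    rw [Real.enorm_eq_ofReal (Real.rpow_nonneg (abs_nonneg _) _),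
      ← ENNReal.ofReal_rpow_of_nonneg (abs_nonneg _) hpr1,
      ← Real.enorm_eq_ofReal_abs, ← ENNReal.rpow_mul, hrc.sub_one_mul_conj]
  have hcongr : ∫⁻ x, ENNReal.ofReal (χ x) * (‖(|v₀ x| ^ (p.toReal - 1) : ℝ)‖₊ : ℝ≥0∞) ^ q.toReal ∂μ
      = ∫⁻ x, ENNReal.ofReal (χ x) * (‖v₀ x‖₊ : ℝ≥0∞) ^ p.toReal ∂μ :=
    lintegral_congr fun x => by rw [hptw x]
  rw [hcongr]
  have hwd := lintegral_withDensity_eq_lintegral_mul μ hχm.ennreal_ofReal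
    (hv₀m.nnnorm.coe_nnreal_ennreal.pow_const p.toReal)
  simp only [Pi.mul_apply] at hwd
  rw [← hwd]
  exact (lintegral_rpow_enorm_lt_top_of_eLpNorm_lt_top hp0 hpt hv₀.2).ne

lemma memℒp_bdd_mul (hχm : Measurable χ) (hχ1 : ∀ᵐ x ∂μ, |χ x| ≤ 1) {r : ℝ≥0∞} {h : X → ℝ}
    (hh : MemLp h r μ) : MemLp (fun x => χ x * h x) r μ := by
  refine MemLp.of_le hh (hχm.aestronglyMeasurable.mul hh.1) ?_
  filter_upwards [hχ1] with x hx
  rw [Real.norm_eq_abs, Real.norm_eq_abs, abs_mul]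
  exact mul_le_of_le_one_left (abs_nonneg _) hx

lemma memℒp_chi_alpha (hχm : Measurable χ) (hχ0 : ∀ x, 0 ≤ χ x) (hχ1 : ∀ᵐ x ∂μ, χ x ≤ 1)
    (hp : 1 < p) (hpt : p ≠ ⊤) (hpq : p⁻¹ + q⁻¹ = 1)
    {α : X → ℝ → ℝ} (hαm : ∀ z, Measurable fun x => α x z) (hαc : ∀ x, Continuous (α x))
    {c1 : ℝ} (hc1 : 0 ≤ c1) {c2 : X → ℝ} (hc2nn : ∀ x, 0 ≤ c2 x) (hc2 : MemLp c2 q μ)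
    (hgrow : ∀ᵐ x ∂μ, ∀ z : ℝ, |α x z| ≤ c1 * |z| ^ (p.toReal - 1) + c2 x)
    {v : X → ℝ} (hv : MemLp v p (μ.withDensity fun x => ENNReal.ofReal (χ x))) :
    MemLp (fun x => χ x * α x (v x)) q μ := by
  set v₀ : X → ℝ := hv.1.mk v with hv₀def
  have hv₀m : Measurable v₀ := hv.1.stronglyMeasurable_mk.measurable
  have haew : v =ᵐ[μ.withDensity fun x => ENNReal.ofReal (χ x)] v₀ := hv.1.ae_eq_mk
  have hv₀ : MemLp v₀ p (μ.withDensity fun x => ENNReal.ofReal (χ x)) := hv.ae_eq haew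
  have hae : ∀ᵐ x ∂μ, χ x ≠ 0 → v x = v₀ x := ae_of_wae hχm hχ0 haew
  have heq : (fun x => χ x * α x (v x)) =ᵐ[μ] fun x => χ x * α x (v₀ x) :=
    chi_mul_ae_eq hχm hχ0 hae α
  refine MemLp.ae_eq heq.symm ?_
  have hGmem : MemLp (fun x => c1 * (χ x * |v₀ x| ^ (p.toReal - 1)) + c2 x) q μ :=
    ((memℒp_chi_abs_pow hχm hχ0 hχ1 hp hpt hpq hv₀).const_mul c1).add hc2
  refine MemLp.of_le hGmem
    ((hχm.mul (meas_comp_alpha hαm hαc hv₀m)).aestronglyMeasurable) ?_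
  filter_upwards [hgrow, hχ1] with x hg hx1
  rw [Real.norm_eq_abs, abs_mul, abs_of_nonneg (hχ0 x)]
  have h1 : χ x * |α x (v₀ x)| ≤ χ x * (c1 * |v₀ x| ^ (p.toReal - 1) + c2 x) :=
    mul_le_mul_of_nonneg_left (hg _) (hχ0 x)
  have h2 : χ x * (c1 * |v₀ x| ^ (p.toReal - 1) + c2 x)
      = c1 * (χ x * |v₀ x| ^ (p.toReal - 1)) + χ x * c2 x := by ring
  have h3 : χ x * c2 x ≤ c2 x := mul_le_of_le_one_left (hc2nn x) hx1
  have h4 : χ x * |α x (v₀ x)| ≤ c1 * (χ x * |v₀ x| ^ (p.toReal - 1)) + c2 x := by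
    rw [h2] at h1; linarith
  exact h4.trans (le_abs_self _)

end PMAux3



namespace PMAux

variable {X : Type*} [MeasurableSpace X] {μ : Measure X} {p q : ℝ≥0∞}

lemma coeFn_lp_sum [Fact (1 ≤ q)] {ι' : Type*} (t : Finset ι') (f : ι' → Lp ℝ q μ) :
    ⇑(∑ i ∈ t, f i) =ᵐ[μ] fun x => ∑ i ∈ t, (f i : X → ℝ) x := by
  classical
  induction t using Finset.induction_on with
  | empty => rw [Finset.sum_empty]; exact Lp.coeFn_zero (E := ℝ) (p := q) (μ := μ)
  | insert a t' hnm ih =>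
    rw [Finset.sum_insert hnm]
    filter_upwards [Lp.coeFn_add (f a) (∑ i ∈ t', f i), ih] with x h1 h2
    rw [Finset.sum_insert hnm, h1, Pi.add_apply, h2]

end PMAux
end Helpers

set_option maxHeartbeats 2000000 in
/-- for the porous-medium type equation, with pivot space
`H = H^{-1}(Ω)` (the dual of `W = H¹₀(Ω)`, embedded into `L^{p/(p-1)}(Ω)` by `ι`,
with `−Δ` realized as the Riesz isomorphism of `W`), a `W^{1,∞}` partition of unity
`{χ_ℓ}` (acting on `W` through the multiplication operators `M ℓ`), and the Friedrich
extensions `f` of `u ↦ Δα(u)` and `f_ℓ` of `u ↦ Δ(χ_ℓ α(u))`, one has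
`⋂_ℓ D(f_ℓ) = D(f)`, where
`D(f) = {u ∈ (L^{p/(p-1)}(Ω))* : α(δ_p u) ∈ H¹₀(Ω)}` and
`D(f_ℓ) = {u ∈ V_ℓ : F_ℓ u ∈ H*}`. -/
theorem porous_medium_iInter_domain_eq {d s : ℕ}
    (Ω : Set (Euc d)) (hΩo : IsOpen Ω) (hΩconn : IsConnected Ω)
    (hΩb : Bornology.IsBounded Ω)
    (Ωs : Fin s → Set (Euc d)) (hso : ∀ ℓ, IsOpen (Ωs ℓ)) (hssub : ∀ ℓ, Ωs ℓ ⊆ Ω)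
    (hcov : (⋃ ℓ, Ωs ℓ) = Ω)
    -- the partition of unity `{χ_ℓ} ⊆ W^{1,∞}(Ω)`
    (χ : Fin s → Euc d → ℝ) (hχlip : ∀ ℓ, ∃ L : NNReal, LipschitzWith L (χ ℓ))
    (hχnn : ∀ ℓ x, 0 ≤ χ ℓ x)
    (hχpos : ∀ ℓ, ∀ x ∈ Ωs ℓ, 0 < χ ℓ x) (hχz : ∀ ℓ, ∀ x ∈ Ω \ Ωs ℓ, χ ℓ x = 0)
    (hχsum : ∀ x ∈ Ω, ∑ ℓ, χ ℓ x = 1)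
    (p q : ℝ≥0∞) [Fact (1 ≤ p)] [Fact (1 ≤ q)]
    (hp : 1 < p) (hpt : p ≠ ⊤) (hpq : p⁻¹ + q⁻¹ = 1)
    -- the map `α` of porous medium type, satisfying (α₁)–(α₄) with exponent `p`
    (α : Euc d → ℝ → ℝ)
    (hαmeas : ∀ z : ℝ, Measurable fun x => α x z) (hαcont : ∀ x, Continuous (α x))
    (c1 : ℝ) (hc1 : 0 < c1) (c2 : Euc d → ℝ) (hc2nn : ∀ x, 0 ≤ c2 x)
    (hc2mem : MemLp c2 q (volume.restrict Ω))
    (hgrowth : ∀ x ∈ Ω, ∀ z : ℝ, |α x z| ≤ c1 * |z| ^ (p.toReal - 1) + c2 x)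
    (hαmono : ∀ x ∈ Ω, ∀ z z' : ℝ, 0 ≤ (α x z - α x z') * (z - z'))
    (c3 : ℝ) (hc3 : 0 < c3) (c4 : Euc d → ℝ)
    (hc4mem : Integrable c4 (volume.restrict Ω))
    (hαcoer : ∀ x ∈ Ω, ∀ z : ℝ, c3 * |z| ^ p.toReal - c4 x ≤ α x z * z)
    -- `W = H¹₀(Ω)`, embedded densely into `L^{p/(p-1)}(Ω)` by `ι`
    {W : Type*} [NormedAddCommGroup W] [InnerProductSpace ℝ W] [CompleteSpace W]
    (ι : W →L[ℝ] Lp ℝ q (volume.restrict Ω))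
    (hιinj : Function.Injective ι) (hιdense : DenseRange ι)
    -- the multiplication operators `M ℓ = (χ_ℓ ·) : H¹₀(Ω) → H¹₀(Ω)`
    (M : Fin s → W →L[ℝ] W)
    (hM : ∀ (ℓ : Fin s) (φ : W),
      ((ι (M ℓ φ) : Lp ℝ q (volume.restrict Ω)) : Euc d → ℝ)
        =ᵐ[volume.restrict Ω]
          fun x => χ ℓ x * ((ι φ : Lp ℝ q (volume.restrict Ω)) : Euc d → ℝ) x)
    (hMsum : ∀ φ : W, ∑ ℓ, M ℓ φ = φ) :
    let μ := volume.restrict Ω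
    -- `D(f)`: `u` is represented by `v ∈ L^p(Ω)` and `α(δ_p u) ∈ H¹₀(Ω)`
    let Df : Set (StrongDual ℝ W) := {u | ∃ v : Euc d → ℝ, MemLp v p μ ∧
      (∀ φ : W, u φ = ∫ x, v x * ((ι φ : Lp ℝ q μ) : Euc d → ℝ) x ∂μ) ∧
      ∃ w : W, ((ι w : Lp ℝ q μ) : Euc d → ℝ) =ᵐ[μ] fun x => α x (v x)}
    -- `D(f_ℓ)`: `u ∈ V_ℓ` (weighted representative `v`) and `F_ℓ u ∈ H*`
    let Dfl : Fin s → Set (StrongDual ℝ W) := fun ℓ =>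
      {u | ∃ v : Euc d → ℝ, MemLp v p (wMeas Ω (χ ℓ)) ∧
        (∀ φ : W, u (M ℓ φ) =
          ∫ x, χ ℓ x * (v x * ((ι φ : Lp ℝ q μ) : Euc d → ℝ) x) ∂μ) ∧
        ∃ g : StrongDual ℝ W,
          ∀ (u' : StrongDual ℝ W) (v' : Euc d → ℝ),
            (MemLp v' p (wMeas Ω (χ ℓ)) ∧ ∀ φ : W, u' (M ℓ φ) =
              ∫ x, χ ℓ x * (v' x * ((ι φ : Lp ℝ q μ) : Euc d → ℝ) x) ∂μ) →
            ∫ x, χ ℓ x * (α x (v x) * v' x) ∂μ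
              = u' ((InnerProductSpace.toDual ℝ W).symm g)}
    (⋂ ℓ, Dfl ℓ) = Df := by

  intro μ Df Dfl
  have hΩm : MeasurableSet Ω := hΩo.measurableSet
  have hfin : IsFiniteMeasure μ := by
    constructor
    rw [Measure.restrict_apply_univ]
    exact hΩb.measure_lt_top
  have hp1 : (1 : ℝ≥0∞) ≤ p := hp.le
  have hq1 : (1 : ℝ≥0∞) ≤ q := Fact.out
  have hp0 : p ≠ 0 := (zero_lt_one.trans hp).ne'
  have hq0 : q ≠ 0 := PMAux3.q_ne_zero hpq
  have hqt : q ≠ ⊤ := PMAux3.q_ne_top hp hpq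
  have hrc : Real.HolderConjugate p.toReal q.toReal := PMAux3.real_conj hp hpt hpq
  have hpq' : q⁻¹ + p⁻¹ = 1 := by rwa [add_comm]
  have hχm : ∀ ℓ, Measurable (χ ℓ) := fun ℓ => (hχlip ℓ).choose_spec.continuous.measurable
  have haeΩ : ∀ᵐ x ∂μ, x ∈ Ω := ae_restrict_mem hΩm
  have hχae : ∀ ℓ, ∀ᵐ x ∂μ, χ ℓ x ≤ 1 := by
    intro ℓ
    filter_upwards [haeΩ] with x hx
    calc χ ℓ x ≤ ∑ ℓ', χ ℓ' x :=
          Finset.single_le_sum (fun ℓ' _ => hχnn ℓ' x) (Finset.mem_univ ℓ)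
      _ = 1 := hχsum x hx
  have habs : ∀ ℓ, ∀ᵐ x ∂μ, |χ ℓ x| ≤ 1 := by
    intro ℓ; filter_upwards [hχae ℓ] with x hx; rwa [abs_of_nonneg (hχnn ℓ x)]
  have hwle : ∀ ℓ, wMeas Ω (χ ℓ) ≤ μ := fun ℓ => PMAux2.wmeas_le (hχm ℓ) (hχae ℓ)
  have hgrow' : ∀ᵐ x ∂μ, ∀ z : ℝ, |α x z| ≤ c1 * |z| ^ (p.toReal - 1) + c2 x := by
    filter_upwards [haeΩ] with x hx; exact hgrowth x hx
  apply Set.eq_of_subset_of_subset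
  · -- `⋂ ℓ, D(f_ℓ) ⊆ D(f)`
    intro u hu
    have key : ∀ ℓ : Fin s, ∃ v : Euc d → ℝ, MemLp v p (wMeas Ω (χ ℓ)) ∧
        (∀ φ : W, u (M ℓ φ) =
          ∫ x, χ ℓ x * (v x * ((ι φ : Lp ℝ q μ) : Euc d → ℝ) x) ∂μ) ∧
        ∃ w : W,
          (∀ᵐ x ∂μ, χ ℓ x = 0 → ((ι w : Lp ℝ q μ) : Euc d → ℝ) x = 0) ∧
          (∀ᵐ x ∂μ, χ ℓ x * (χ ℓ x * α x (v x))
            = χ ℓ x * ((ι w : Lp ℝ q μ) : Euc d → ℝ) x) := by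
      intro ℓ
      obtain ⟨v, hv, hrep, gg, hg⟩ := Set.mem_iInter.mp hu ℓ
      set w : W := (InnerProductSpace.toDual ℝ W).symm gg with hwdef
      refine ⟨v, hv, hrep, w, ?_, ?_⟩
      · -- `ι w` vanishes a.e. on `{χ ℓ = 0}`
        set K : Submodule ℝ W := LinearMap.range (M ℓ : W →ₗ[ℝ] W) with hK
        have hwK : w ∈ K.topologicalClosure := by
          rw [← Submodule.orthogonal_orthogonal_eq_closure, Submodule.mem_orthogonal]
          intro y hy
          have hy0 : ∀ φ : W, (inner ℝ y (M ℓ φ) : ℝ) = 0 := by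
            intro φ
            rw [real_inner_comm]
            exact (Submodule.mem_orthogonal K y).mp hy (M ℓ φ)
              (LinearMap.mem_range.mpr ⟨φ, rfl⟩)
          have h1 := hg u v ⟨hv, hrep⟩
          have h2 := hg (u + (InnerProductSpace.toDual ℝ W) y) v ⟨hv, by
            intro φ
            rw [ContinuousLinearMap.add_apply, InnerProductSpace.toDual_apply_apply, hy0 φ,
              add_zero]
            exact hrep φ⟩
          rw [ContinuousLinearMap.add_apply, InnerProductSpace.toDual_apply_apply, ← h1] at h2
          have : (inner ℝ y w : ℝ) = 0 := by rw [hwdef]; linarith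
          exact this
        have hS : MeasurableSet {x | χ ℓ x = 0} := (hχm ℓ) (measurableSet_singleton 0)
        have hwcl : w ∈ closure (K : Set W) := by
          rw [← Submodule.topologicalClosure_coe]; exact hwK
        obtain ⟨ψ, hψK, hψlim⟩ := mem_closure_iff_seq_limit.mp hwcl
        set ν := μ.restrict {x | χ ℓ x = 0} with hν
        have hιlim : Tendsto (fun n => ι (ψ n)) atTop (𝓝 (ι w)) :=
          ((ι.continuous.tendsto w).comp hψlim)
        have hnlim : Tendsto (fun n => ‖ι w - ι (ψ n)‖) atTop (𝓝 0) := by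
          have h := tendsto_iff_norm_sub_tendsto_zero.mp hιlim
          have heq : (fun n => ‖ι w - ι (ψ n)‖) = fun n => ‖ι (ψ n) - ι w‖ :=
            funext fun n => norm_sub_rev _ _
          rw [heq]; exact h
        have hzero : ∀ n, ((ι (ψ n) : Lp ℝ q μ) : Euc d → ℝ) =ᵐ[ν] 0 := by
          intro n
          obtain ⟨φ, hφ⟩ := LinearMap.mem_range.mp (hψK n)
          have hMφ : ((ι (ψ n) : Lp ℝ q μ) : Euc d → ℝ)
              =ᵐ[μ] fun x => χ ℓ x * ((ι φ : Lp ℝ q μ) : Euc d → ℝ) x := by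
            have hφ' : M ℓ φ = ψ n := hφ
            rw [← hφ']
            exact hM ℓ φ
          filter_upwards [ae_restrict_of_ae hMφ, ae_restrict_mem hS] with x h1 h2
          have h2' : χ ℓ x = 0 := h2
          rw [h1, h2', zero_mul]
          rfl
        have hb : ∀ n, eLpNorm ((ι w : Lp ℝ q μ) : Euc d → ℝ) q ν
            ≤ ENNReal.ofReal ‖ι w - ι (ψ n)‖ := by
          intro n
          have haes1 : AEStronglyMeasurable ((ι w : Lp ℝ q μ) : Euc d → ℝ) ν :=
            (Lp.aestronglyMeasurable _).restrict
          have haes2 : AEStronglyMeasurable ((ι (ψ n) : Lp ℝ q μ) : Euc d → ℝ) ν :=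
            (Lp.aestronglyMeasurable _).restrict
          calc eLpNorm (⇑(ι w)) q ν
              = eLpNorm ((⇑(ι w) - ⇑(ι (ψ n))) + ⇑(ι (ψ n))) q ν := by
                rw [sub_add_cancel]
            _ ≤ eLpNorm (⇑(ι w) - ⇑(ι (ψ n))) q ν + eLpNorm (⇑(ι (ψ n))) q ν :=
                eLpNorm_add_le (haes1.sub haes2) haes2 hq1
            _ = eLpNorm (⇑(ι w) - ⇑(ι (ψ n))) q ν := by
                rw [eLpNorm_congr_ae (hzero n), eLpNorm_zero, add_zero]
            _ ≤ eLpNorm (⇑(ι w) - ⇑(ι (ψ n))) q μ :=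
                eLpNorm_mono_measure _ Measure.restrict_le_self
            _ = eLpNorm (⇑(ι w - ι (ψ n))) q μ :=
                (eLpNorm_congr_ae (Lp.coeFn_sub _ _)).symm
            _ = ENNReal.ofReal ‖ι w - ι (ψ n)‖ := by
                rw [Lp.norm_def, ENNReal.ofReal_toReal (Lp.eLpNorm_ne_top _)]
        have h0 : eLpNorm ((ι w : Lp ℝ q μ) : Euc d → ℝ) q ν = 0 := by
          refine le_antisymm ?_ (by simp)
          have htt : Tendsto (fun n => ENNReal.ofReal ‖ι w - ι (ψ n)‖) atTop (𝓝 0) := by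
            have := ENNReal.tendsto_ofReal hnlim
            simpa using this
          exact ge_of_tendsto htt (Eventually.of_forall hb)
        have hae0 := (eLpNorm_eq_zero_iff ((Lp.aestronglyMeasurable _).restrict) hq0).mp h0
        have := (ae_restrict_iff' hS).mp hae0
        filter_upwards [this] with x hx hc
        exact hx hc
      · -- a.e. identification `χ² α(v) = χ ι w`
        have hvw : MemLp v p (μ.withDensity fun x => ENNReal.ofReal (χ ℓ x)) := hv
        have hA1 : MemLp (fun x => χ ℓ x * (χ ℓ x * α x (v x))) q μ :=
          PMAux3.memℒp_bdd_mul (hχm ℓ) (habs ℓ)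
            (PMAux3.memℒp_chi_alpha (hχm ℓ) (hχnn ℓ) (hχae ℓ) hp hpt hpq hαmeas hαcont
              hc1.le hc2nn hc2mem hgrow' hvw)
        have hA2 : MemLp (fun x => χ ℓ x * ((ι w : Lp ℝ q μ) : Euc d → ℝ) x) q μ :=
          PMAux3.memℒp_bdd_mul (hχm ℓ) (habs ℓ) (Lp.memLp _)
        have hGmem : MemLp (fun x => χ ℓ x * (χ ℓ x * α x (v x))
            - χ ℓ x * ((ι w : Lp ℝ q μ) : Euc d → ℝ) x) q μ := hA1.sub hA2
        have hz : ∀ t : Euc d → ℝ, MemLp t p μ →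
            ∫ x, (χ ℓ x * (χ ℓ x * α x (v x))
              - χ ℓ x * ((ι w : Lp ℝ q μ) : Euc d → ℝ) x) * t x ∂μ = 0 := by
          intro t ht
          have hχt : MemLp (fun x => χ ℓ x * t x) p μ :=
            PMAux3.memℒp_bdd_mul (hχm ℓ) (habs ℓ) ht
          have hadm2 : ∀ φ : W, ((PMAux.pairing hpq hχt).comp ι) (M ℓ φ)
              = ∫ x, χ ℓ x * ((χ ℓ x * t x) * ((ι φ : Lp ℝ q μ) : Euc d → ℝ) x) ∂μ := by
            intro φ
            show ∫ x, (χ ℓ x * t x) * ((ι (M ℓ φ) : Lp ℝ q μ) : Euc d → ℝ) x ∂μ = _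
            refine integral_congr_ae ?_
            filter_upwards [hM ℓ φ] with x hx
            rw [hx]; ring
          have hgeq := hg ((PMAux.pairing hpq hχt).comp ι) (fun x => χ ℓ x * t x)
            ⟨hχt.mono_measure (hwle ℓ), hadm2⟩
          have hgeq2 : ∫ x, χ ℓ x * (α x (v x) * (χ ℓ x * t x)) ∂μ
              = ∫ x, (χ ℓ x * t x) * ((ι w : Lp ℝ q μ) : Euc d → ℝ) x ∂μ := hgeq
          have hint1 : Integrable (fun x => (χ ℓ x * (χ ℓ x * α x (v x))) * t x) μ :=
            PMAux.holder_int hpq' hA1 ht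
          have hint2 : Integrable
              (fun x => (χ ℓ x * ((ι w : Lp ℝ q μ) : Euc d → ℝ) x) * t x) μ :=
            PMAux.holder_int hpq' hA2 ht
          have e1 : ∫ x, (χ ℓ x * (χ ℓ x * α x (v x))
                - χ ℓ x * ((ι w : Lp ℝ q μ) : Euc d → ℝ) x) * t x ∂μ
              = ∫ x, (χ ℓ x * (χ ℓ x * α x (v x))) * t x ∂μ
                - ∫ x, (χ ℓ x * ((ι w : Lp ℝ q μ) : Euc d → ℝ) x) * t x ∂μ := by
            rw [← integral_sub hint1 hint2]
            refine integral_congr_ae (Eventually.of_forall fun x => ?_)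
            ring
          rw [e1, sub_eq_zero]
          calc ∫ x, (χ ℓ x * (χ ℓ x * α x (v x))) * t x ∂μ
              = ∫ x, χ ℓ x * (α x (v x) * (χ ℓ x * t x)) ∂μ :=
                integral_congr_ae (Eventually.of_forall fun x => by ring)
            _ = ∫ x, (χ ℓ x * t x) * ((ι w : Lp ℝ q μ) : Euc d → ℝ) x ∂μ := hgeq2
            _ = ∫ x, (χ ℓ x * ((ι w : Lp ℝ q μ) : Euc d → ℝ) x) * t x ∂μ :=
                integral_congr_ae (Eventually.of_forall fun x => by ring)
        have hz0 := PMAux.ae_zero_of_test hpq hq1 hGmem hz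
        filter_upwards [hz0] with x hx
        exact sub_eq_zero.mp hx
    choose vl hvl hrepl wl hwl0 hwl7 using key
    set v : Euc d → ℝ := fun x => ∑ ℓ, χ ℓ x * vl ℓ x with hvdef
    have hvym : ∀ ℓ, MemLp (fun x => χ ℓ x * vl ℓ x) p μ := fun ℓ =>
      PMAux2.memℒp_chi_mul_of_w (hχm ℓ) (hχnn ℓ) (hχae ℓ) hrc.lt.le hpt (hvl ℓ)
    have hvmem : MemLp v p μ := memLp_finset_sum Finset.univ fun ℓ _ => hvym ℓ
    have hterm_int : ∀ (φ : W) (ℓ : Fin s), Integrable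
        (fun x => χ ℓ x * (vl ℓ x * ((ι φ : Lp ℝ q μ) : Euc d → ℝ) x)) μ := by
      intro φ ℓ
      have := PMAux.holder_int hpq (hvym ℓ) (Lp.memLp (ι φ))
      exact this.congr (Eventually.of_forall fun x => by ring)
    have hrepglob : ∀ φ : W, u φ = ∫ x, v x * ((ι φ : Lp ℝ q μ) : Euc d → ℝ) x ∂μ := by
      intro φ
      calc u φ = u (∑ ℓ, M ℓ φ) := by rw [hMsum φ]
        _ = ∑ ℓ, u (M ℓ φ) := map_sum u _ _
        _ = ∑ ℓ, ∫ x, χ ℓ x * (vl ℓ x * ((ι φ : Lp ℝ q μ) : Euc d → ℝ) x) ∂μ :=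
            Finset.sum_congr rfl fun ℓ _ => hrepl ℓ φ
        _ = ∫ x, ∑ ℓ, χ ℓ x * (vl ℓ x * ((ι φ : Lp ℝ q μ) : Euc d → ℝ) x) ∂μ :=
            (integral_finset_sum _ fun ℓ _ => hterm_int φ ℓ).symm
        _ = ∫ x, v x * ((ι φ : Lp ℝ q μ) : Euc d → ℝ) x ∂μ := by
            refine integral_congr_ae (Eventually.of_forall fun x => ?_)
            simp only [hvdef]
            rw [Finset.sum_mul]
            exact Finset.sum_congr rfl fun ℓ _ => by ring
    have hMcomm : ∀ (ℓ ℓ' : Fin s) (φ : W), M ℓ (M ℓ' φ) = M ℓ' (M ℓ φ) := by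
      intro ℓ ℓ' φ
      apply hιinj
      apply Lp.ext
      filter_upwards [hM ℓ (M ℓ' φ), hM ℓ' (M ℓ φ), hM ℓ' φ, hM ℓ φ] with x h1 h2 h3 h4
      rw [h1, h2, h3, h4]; ring
    have hF8 : ∀ ℓ ℓ' : Fin s, (fun x => χ ℓ x * χ ℓ' x * vl ℓ x)
        =ᵐ[μ] fun x => χ ℓ x * χ ℓ' x * vl ℓ' x := by
      intro ℓ ℓ'
      have hm1 : MemLp (fun x => χ ℓ x * χ ℓ' x * vl ℓ x) p μ := by
        have := PMAux3.memℒp_bdd_mul (hχm ℓ') (habs ℓ') (hvym ℓ)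
        exact this.ae_eq (Eventually.of_forall fun x => by ring)
      have hm2 : MemLp (fun x => χ ℓ x * χ ℓ' x * vl ℓ' x) p μ := by
        have := PMAux3.memℒp_bdd_mul (hχm ℓ) (habs ℓ) (hvym ℓ')
        exact this.ae_eq (Eventually.of_forall fun x => by ring)
      have htest : ∀ φ : W, ∫ x, (χ ℓ x * χ ℓ' x * vl ℓ x - χ ℓ x * χ ℓ' x * vl ℓ' x)
          * ((ι φ : Lp ℝ q μ) : Euc d → ℝ) x ∂μ = 0 := by
        intro φ
        have i1 : Integrable
            (fun x => (χ ℓ x * χ ℓ' x * vl ℓ x) * ((ι φ : Lp ℝ q μ) : Euc d → ℝ) x) μ :=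
          PMAux.holder_int hpq hm1 (Lp.memLp _)
        have i2 : Integrable
            (fun x => (χ ℓ x * χ ℓ' x * vl ℓ' x) * ((ι φ : Lp ℝ q μ) : Euc d → ℝ) x) μ :=
          PMAux.holder_int hpq hm2 (Lp.memLp _)
        have e0 : ∫ x, (χ ℓ x * χ ℓ' x * vl ℓ x - χ ℓ x * χ ℓ' x * vl ℓ' x)
              * ((ι φ : Lp ℝ q μ) : Euc d → ℝ) x ∂μ
            = ∫ x, (χ ℓ x * χ ℓ' x * vl ℓ x) * ((ι φ : Lp ℝ q μ) : Euc d → ℝ) x ∂μ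
              - ∫ x, (χ ℓ x * χ ℓ' x * vl ℓ' x) * ((ι φ : Lp ℝ q μ) : Euc d → ℝ) x ∂μ := by
          rw [← integral_sub i1 i2]
          exact integral_congr_ae (Eventually.of_forall fun x => by ring)
        rw [e0, sub_eq_zero]
        have c1' : u (M ℓ (M ℓ' φ))
            = ∫ x, (χ ℓ x * χ ℓ' x * vl ℓ x) * ((ι φ : Lp ℝ q μ) : Euc d → ℝ) x ∂μ := by
          rw [hrepl ℓ (M ℓ' φ)]
          refine integral_congr_ae ?_
          filter_upwards [hM ℓ' φ] with x hx
          rw [hx]; ring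
        have c2' : u (M ℓ' (M ℓ φ))
            = ∫ x, (χ ℓ x * χ ℓ' x * vl ℓ' x) * ((ι φ : Lp ℝ q μ) : Euc d → ℝ) x ∂μ := by
          rw [hrepl ℓ' (M ℓ φ)]
          refine integral_congr_ae ?_
          filter_upwards [hM ℓ φ] with x hx
          rw [hx]; ring
        rw [← c1', ← c2', hMcomm ℓ ℓ' φ]
      have hdz := PMAux.ae_zero_of_dense hpq hp1 (hm1.sub hm2) ι hιdense htest
      filter_upwards [hdz] with x hx
      exact sub_eq_zero.mp hx
    have hveq : ∀ ℓ : Fin s, ∀ᵐ x ∂μ, χ ℓ x ≠ 0 → v x = vl ℓ x := by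
      intro ℓ
      have hall : ∀ᵐ x ∂μ, ∀ ℓ' : Fin s,
          χ ℓ x * χ ℓ' x * vl ℓ x = χ ℓ x * χ ℓ' x * vl ℓ' x :=
        ae_all_iff.mpr fun ℓ' => hF8 ℓ ℓ'
      filter_upwards [hall, haeΩ] with x hx hxΩ hχne
      have e1 : ∀ ℓ' : Fin s, χ ℓ' x * vl ℓ' x = χ ℓ' x * vl ℓ x := by
        intro ℓ'
        have h := hx ℓ'
        rw [mul_assoc, mul_assoc] at h
        exact (mul_left_cancel₀ hχne h).symm
      calc v x = ∑ ℓ', χ ℓ' x * vl ℓ' x := rfl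
        _ = ∑ ℓ' : Fin s, χ ℓ' x * vl ℓ x := Finset.sum_congr rfl fun ℓ' _ => e1 ℓ'
        _ = (∑ ℓ' : Fin s, χ ℓ' x) * vl ℓ x := (Finset.sum_mul _ _ _).symm
        _ = vl ℓ x := by rw [hχsum x hxΩ, one_mul]
    refine ⟨v, hvmem, hrepglob, ∑ ℓ, wl ℓ, ?_⟩
    have hcoesum : ((ι (∑ ℓ, wl ℓ) : Lp ℝ q μ) : Euc d → ℝ)
        =ᵐ[μ] fun x => ∑ ℓ, ((ι (wl ℓ) : Lp ℝ q μ) : Euc d → ℝ) x := by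
      rw [map_sum]
      exact PMAux.coeFn_lp_sum Finset.univ fun ℓ => ι (wl ℓ)
    have hall0 : ∀ᵐ x ∂μ, ∀ ℓ, χ ℓ x = 0 → ((ι (wl ℓ) : Lp ℝ q μ) : Euc d → ℝ) x = 0 :=
      ae_all_iff.mpr hwl0
    have hall7 : ∀ᵐ x ∂μ, ∀ ℓ, χ ℓ x * (χ ℓ x * α x (vl ℓ x))
        = χ ℓ x * ((ι (wl ℓ) : Lp ℝ q μ) : Euc d → ℝ) x := ae_all_iff.mpr hwl7
    have hallv : ∀ᵐ x ∂μ, ∀ ℓ, χ ℓ x ≠ 0 → v x = vl ℓ x := ae_all_iff.mpr hveq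
    filter_upwards [hcoesum, hall0, hall7, hallv, haeΩ] with x h1 h2 h3 h4 hxΩ
    rw [h1]
    have e1 : ∀ ℓ : Fin s, ((ι (wl ℓ) : Lp ℝ q μ) : Euc d → ℝ) x = χ ℓ x * α x (v x) := by
      intro ℓ
      by_cases hc : χ ℓ x = 0
      · rw [h2 ℓ hc, hc, zero_mul]
      · have h' := mul_left_cancel₀ hc (h3 ℓ)
        rw [← h', h4 ℓ hc]
    calc ∑ ℓ, ((ι (wl ℓ) : Lp ℝ q μ) : Euc d → ℝ) x
        = ∑ ℓ : Fin s, χ ℓ x * α x (v x) := Finset.sum_congr rfl fun ℓ _ => e1 ℓ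
      _ = (∑ ℓ : Fin s, χ ℓ x) * α x (v x) := (Finset.sum_mul _ _ _).symm
      _ = α x (v x) := by rw [hχsum x hxΩ, one_mul]
  · -- `D(f) ⊆ ⋂ ℓ, D(f_ℓ)`
    intro u hu
    obtain ⟨v, hv, hrep, w, hw⟩ := hu
    refine Set.mem_iInter.mpr fun ℓ => ?_
    refine ⟨v, hv.mono_measure (hwle ℓ), fun φ => ?_,
      (InnerProductSpace.toDual ℝ W) (M ℓ w), fun u' v' hu'v' => ?_⟩
    · rw [hrep (M ℓ φ)]
      refine integral_congr_ae ?_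
      filter_upwards [hM ℓ φ] with x hx
      rw [hx]; ring
    · obtain ⟨hv', hrep'⟩ := hu'v'
      rw [LinearIsometryEquiv.symm_apply_apply, hrep' w]
      refine integral_congr_ae ?_
      filter_upwards [hw] with x hx
      rw [hx]; ring
end
end
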